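/- arXiv:2106.08082 — 9 statements merged into one kernel-verified Lean document; each statement's English description precedes it below -/
import Mathlib

section
/- Let I be a double interval and f : I → ℝ. Then f is double continuous on I if and only if f is globally double continuous on I. -/
open Set Filter Topology MeasureTheory

noncomputable section

/-- The double difference of `f` from `a` to `b`:
`Δ_a^b(f) = f(b₁,b₂) − f(b₁,a₂) − f(a₁,b₂) + f(a₁,a₂)`. -/
def dDiff (f : ℝ × ℝ → ℝ) (a b : ℝ × ℝ) : ℝ :=
  f (b.1, b.2) - f (b.1, a.2) - f (a.1, b.2) + f (a.1, a.2)

/-- The double mean slope of `f` from `a` to `b`. -/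
def dSlope (f : ℝ × ℝ → ℝ) (a b : ℝ × ℝ) : ℝ :=
  dDiff f a b / ((b.1 - a.1) * (b.2 - a.2))

/-- The double limit of `g` at `a` equals `L`, restricted to the set `S`. -/
def DoubleLimWithin (g : ℝ × ℝ → ℝ) (S : Set (ℝ × ℝ)) (a : ℝ × ℝ) (L : ℝ) : Prop :=
  ∀ ε > 0, ∃ δ₁ > 0, ∃ δ₂ > 0, ∀ x ∈ S,
    0 < |x.1 - a.1| → |x.1 - a.1| < δ₁ → 0 < |x.2 - a.2| → |x.2 - a.2| < δ₂ →
      |g x - L| < ε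

/-- The (unrestricted) double limit of `g` at `a` equals `L`. -/
def DoubleLim (g : ℝ × ℝ → ℝ) (a : ℝ × ℝ) (L : ℝ) : Prop :=
  DoubleLimWithin g Set.univ a L

/-- `f` has double derivative `L` at `a`, where the double limit of mean slopes is
restricted to the set `S` (this yields the signed/one-sided notions at boundary
points when `S` is a double interval). -/
def HasDoubleDerivWithinAt (f : ℝ × ℝ → ℝ) (S : Set (ℝ × ℝ)) (a : ℝ × ℝ) (L : ℝ) : Prop :=
  DoubleLimWithin (fun x => dSlope f a x) S a L

/-- `f` has double derivative `L` at `a`. -/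
def HasDoubleDerivAt (f : ℝ × ℝ → ℝ) (a : ℝ × ℝ) (L : ℝ) : Prop :=
  DoubleLim (fun x => dSlope f a x) a L

/-- `f` is double continuous on the double interval `S₁ × S₂` (at boundary points
this amounts to the appropriate signed/one-sided double continuity). -/
def DoubleContinuousOn (f : ℝ × ℝ → ℝ) (S₁ S₂ : Set ℝ) : Prop :=
  ∀ a₁ ∈ S₁, ∀ a₂ ∈ S₂, ∃ δ₁ > 0, ∃ δ₂ > 0,
    (∀ x₁ ∈ Set.Ioo (a₁ - δ₁) (a₁ + δ₁) ∩ S₁,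
      Filter.Tendsto (fun x₂ => dDiff f (a₁, a₂) (x₁, x₂))
        (nhdsWithin a₂ (S₂ \ {a₂})) (nhds 0)) ∧
    (∀ x₂ ∈ Set.Ioo (a₂ - δ₂) (a₂ + δ₂) ∩ S₂,
      Filter.Tendsto (fun x₁ => dDiff f (a₁, a₂) (x₁, x₂))
        (nhdsWithin a₁ (S₁ \ {a₁})) (nhds 0))

/-- `f` is globally double continuous on the double interval `S₁ × S₂`. -/
def GloballyDoubleContinuousOn (f : ℝ × ℝ → ℝ) (S₁ S₂ : Set ℝ) : Prop :=
  (∀ c ∈ S₁, ∀ d ∈ S₁, ∀ e ∈ S₂,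
    Filter.Tendsto (fun x₂ => dDiff f (d, e) (c, x₂)) (nhdsWithin e (S₂ \ {e})) (nhds 0)) ∧
  (∀ c ∈ S₂, ∀ d ∈ S₂, ∀ e ∈ S₁,
    Filter.Tendsto (fun x₁ => dDiff f (e, d) (x₁, c)) (nhdsWithin e (S₁ \ {e})) (nhds 0))


/-- A property that is locally constant on an ord-connected set propagates. -/
lemma chain_prop {I : Set ℝ} (hI : I.OrdConnected) {P : ℝ → Prop}
    (h : ∀ a ∈ I, ∃ δ > 0, ∀ x ∈ Set.Ioo (a - δ) (a + δ) ∩ I, (P x ↔ P a)) :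
    ∀ c ∈ I, ∀ d ∈ I, P d → P c := by
  intro c hc d hd hPd
  by_contra hPc
  have hch : ∀ a : I, ∃ δ : ℝ, 0 < δ ∧
      ∀ x ∈ Set.Ioo ((a : ℝ) - δ) ((a : ℝ) + δ) ∩ I, (P x ↔ P (a : ℝ)) := by
    intro a
    obtain ⟨δ, hδ, hx⟩ := h a a.2
    exact ⟨δ, hδ, hx⟩
  choose δ hδpos hδ using hch
  set U : Set ℝ := ⋃ a : {a : I // P (a : ℝ)},
    Set.Ioo ((a : ℝ) - δ a.1) ((a : ℝ) + δ a.1) with hU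
  set V : Set ℝ := ⋃ a : {a : I // ¬ P (a : ℝ)},
    Set.Ioo ((a : ℝ) - δ a.1) ((a : ℝ) + δ a.1) with hV
  have hUo : IsOpen U := isOpen_iUnion fun _ => isOpen_Ioo
  have hVo : IsOpen V := isOpen_iUnion fun _ => isOpen_Ioo
  have hmem : ∀ a : I, (a : ℝ) ∈ Set.Ioo ((a : ℝ) - δ a) ((a : ℝ) + δ a) := fun a =>
    ⟨by linarith [hδpos a], by linarith [hδpos a]⟩
  have hJ : Set.uIcc d c ⊆ I := hI.uIcc_subset hd hc
  have hpre : IsPreconnected (Set.uIcc d c) := isPreconnected_uIcc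
  have hsub : Set.uIcc d c ⊆ U ∪ V := by
    intro x hx
    by_cases hp : P x
    · exact Or.inl (Set.mem_iUnion.2 ⟨⟨⟨x, hJ hx⟩, hp⟩, hmem ⟨x, hJ hx⟩⟩)
    · exact Or.inr (Set.mem_iUnion.2 ⟨⟨⟨x, hJ hx⟩, hp⟩, hmem ⟨x, hJ hx⟩⟩)
  have hdU : d ∈ Set.uIcc d c ∩ U :=
    ⟨Set.left_mem_uIcc, Set.mem_iUnion.2 ⟨⟨⟨d, hd⟩, hPd⟩, hmem ⟨d, hd⟩⟩⟩
  have hcV : c ∈ Set.uIcc d c ∩ V :=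
    ⟨Set.right_mem_uIcc, Set.mem_iUnion.2 ⟨⟨⟨c, hc⟩, hPc⟩, hmem ⟨c, hc⟩⟩⟩
  obtain ⟨t, htJ, htU, htV⟩ := hpre U V hUo hVo hsub ⟨d, hdU⟩ ⟨c, hcV⟩
  obtain ⟨a, hta⟩ := Set.mem_iUnion.1 htU
  obtain ⟨b, htb⟩ := Set.mem_iUnion.1 htV
  have hPt : P t := (hδ a.1 t ⟨hta, hJ htJ⟩).mpr a.2
  exact b.2 ((hδ b.1 t ⟨htb, hJ htJ⟩).mp hPt)

/-- on a double interval, double continuity is equivalent to global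
double continuity. -/
theorem stmt1 (f : ℝ × ℝ → ℝ) (I₁ I₂ : Set ℝ)
    (hI₁ : I₁.OrdConnected) (hI₂ : I₂.OrdConnected) :
    DoubleContinuousOn f I₁ I₂ ↔ GloballyDoubleContinuousOn f I₁ I₂ := by
  constructor
  · intro hloc
    constructor
    · intro c hc d hd e he
      set P : ℝ → Prop := fun t =>
        Filter.Tendsto (fun x₂ => dDiff f (d, e) (t, x₂))
          (nhdsWithin e (I₂ \ {e})) (nhds 0) with hP
      have hPd : P d := by
        have : ∀ x₂ : ℝ, dDiff f (d, e) (d, x₂) = 0 := by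
          intro x₂; simp [dDiff]
        simpa [hP, this] using tendsto_const_nhds
      have hlocP : ∀ a ∈ I₁, ∃ δ > 0,
          ∀ x ∈ Set.Ioo (a - δ) (a + δ) ∩ I₁, (P x ↔ P a) := by
        intro a ha
        obtain ⟨δ₁, hδ₁, δ₂, hδ₂, h1, _⟩ := hloc a ha e he
        refine ⟨δ₁, hδ₁, fun x hx => ?_⟩
        have hT : Filter.Tendsto (fun x₂ => dDiff f (a, e) (x, x₂))
            (nhdsWithin e (I₂ \ {e})) (nhds 0) := h1 x hx
        have key : ∀ x₂ : ℝ, dDiff f (d, e) (x, x₂) =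
            dDiff f (d, e) (a, x₂) + dDiff f (a, e) (x, x₂) := by
          intro x₂; simp [dDiff]; ring
        constructor
        · intro hPx
          have := hPx.sub hT
          simp only [hP]
          convert this using 2 with x₂
          · rw [key]; ring
          · ring
        · intro hPa
          have := hPa.add hT
          simp only [hP]
          convert this using 2 with x₂
          · rw [key]
          · ring
      exact chain_prop hI₁ hlocP c hc d hd hPd
    · intro c hc d hd e he
      set P : ℝ → Prop := fun t =>
        Filter.Tendsto (fun x₁ => dDiff f (e, d) (x₁, t))
          (nhdsWithin e (I₁ \ {e})) (nhds 0) with hP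
      have hPd : P d := by
        have : ∀ x₁ : ℝ, dDiff f (e, d) (x₁, d) = 0 := by
          intro x₁; simp [dDiff]
        simpa [hP, this] using tendsto_const_nhds
      have hlocP : ∀ a ∈ I₂, ∃ δ > 0,
          ∀ x ∈ Set.Ioo (a - δ) (a + δ) ∩ I₂, (P x ↔ P a) := by
        intro a ha
        obtain ⟨δ₁, hδ₁, δ₂, hδ₂, _, h2⟩ := hloc e he a ha
        refine ⟨δ₂, hδ₂, fun x hx => ?_⟩
        have hT : Filter.Tendsto (fun x₁ => dDiff f (e, a) (x₁, x))
            (nhdsWithin e (I₁ \ {e})) (nhds 0) := h2 x hx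
        have key : ∀ x₁ : ℝ, dDiff f (e, d) (x₁, x) =
            dDiff f (e, d) (x₁, a) + dDiff f (e, a) (x₁, x) := by
          intro x₁; simp [dDiff]; ring
        constructor
        · intro hPx
          have := hPx.sub hT
          simp only [hP]
          convert this using 2 with x₁
          · rw [key]; ring
          · ring
        · intro hPa
          have := hPa.add hT
          simp only [hP]
          convert this using 2 with x₁
          · rw [key]
          · ring
      exact chain_prop hI₂ hlocP c hc d hd hPd
  · intro hglob
    intro a₁ h₁ a₂ h₂
    refine ⟨1, one_pos, 1, one_pos, ?_, ?_⟩
    · intro x₁ hx₁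
      exact hglob.1 x₁ hx₁.2 a₁ h₁ a₂ h₂
    · intro x₂ hx₂
      exact hglob.2 x₂ hx₂.2 a₂ h₂ a₁ h₁
end
end

section
/- Let a, b ∈ ℝ² with a < b and let f : [a,b] → ℝ be continuous (in the ordinary sense). Let D be the smallest closed interval in ℝ containing the four values f(a₁,a₂), f(b₁,b₂), f(a₁,b₂) and f(b₁,a₂). If d is an interior point of D, then there exists c ∈ (a,b) with f(c) = d. -/
open Set Filter Topology MeasureTheory

noncomputable section

lemma key_lt (f : ℝ × ℝ → ℝ) (a b : ℝ × ℝ)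
    (hab1 : a.1 < b.1) (hab2 : a.2 < b.2)
    (hf : ContinuousOn f (Set.Icc a.1 b.1 ×ˢ Set.Icc a.2 b.2)) (d : ℝ)
    (p : ℝ × ℝ) (hp : p ∈ Set.Icc a.1 b.1 ×ˢ Set.Icc a.2 b.2) (hpd : f p < d) :
    ∃ y ∈ Set.Ioo a.1 b.1 ×ˢ Set.Ioo a.2 b.2, f y < d := by
  set m1 : ℝ := (a.1 + b.1) / 2 with hm1
  set m2 : ℝ := (a.2 + b.2) / 2 with hm2
  have hm1a : a.1 < m1 := by simp [hm1]; linarith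
  have hm1b : m1 < b.1 := by simp [hm1]; linarith
  have hm2a : a.2 < m2 := by simp [hm2]; linarith
  have hm2b : m2 < b.2 := by simp [hm2]; linarith
  obtain ⟨⟨hp1a, hp1b⟩, hp2a, hp2b⟩ := hp
  set g : ℝ → ℝ × ℝ := fun t => (p.1 + t * (m1 - p.1), p.2 + t * (m2 - p.2)) with hg
  have hgmem : ∀ t ∈ Set.Ioc (0:ℝ) 1, g t ∈ Set.Ioo a.1 b.1 ×ˢ Set.Ioo a.2 b.2 := by
    rintro t ⟨ht0, ht1⟩
    refine ⟨⟨?_, ?_⟩, ?_, ?_⟩ <;> simp only [hg] <;>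
      nlinarith [mul_pos ht0 (sub_pos.2 hm1a), mul_pos ht0 (sub_pos.2 hm2a),
        mul_pos ht0 (sub_pos.2 hm1b), mul_pos ht0 (sub_pos.2 hm2b),
        mul_nonneg ht0.le (sub_nonneg.2 hp1a), mul_nonneg ht0.le (sub_nonneg.2 hp2a),
        mul_nonneg ht0.le (sub_nonneg.2 hp1b), mul_nonneg ht0.le (sub_nonneg.2 hp2b)]
  have hgc : Continuous g := by fun_prop
  have hg0 : g 0 = p := by simp [hg]
  have htend : Tendsto (fun t => f (g t)) (𝓝[Set.Ioc (0:ℝ) 1] 0) (𝓝 (f p)) := by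
    have h1 : Tendsto g (𝓝[Set.Ioc (0:ℝ) 1] 0)
        (𝓝[Set.Icc a.1 b.1 ×ˢ Set.Icc a.2 b.2] p) := by
      apply tendsto_nhdsWithin_of_tendsto_nhds_of_eventually_within
      · exact hg0 ▸ (hgc.tendsto 0).mono_left nhdsWithin_le_nhds
      · exact eventually_nhdsWithin_of_forall fun t ht =>
          (Set.prod_mono Set.Ioo_subset_Icc_self Set.Ioo_subset_Icc_self) (hgmem t ht)
    exact (hf p ⟨⟨hp1a, hp1b⟩, hp2a, hp2b⟩).tendsto.comp h1
  have hev : ∀ᶠ t in 𝓝[Set.Ioc (0:ℝ) 1] 0, f (g t) < d := htend.eventually_lt_const hpd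
  have : NeBot (𝓝[Set.Ioc (0:ℝ) 1] (0:ℝ)) := left_nhdsWithin_Ioc_neBot one_pos
  obtain ⟨t, htd, htmem⟩ := (hev.and self_mem_nhdsWithin).exists
  exact ⟨g t, hgmem t htmem, htd⟩

/-- intermediate value property over a double compact interval. -/
theorem stmt3 (f : ℝ × ℝ → ℝ) (a b : ℝ × ℝ)
    (hab1 : a.1 < b.1) (hab2 : a.2 < b.2)
    (hf : ContinuousOn f (Set.Icc a.1 b.1 ×ˢ Set.Icc a.2 b.2))
    (d : ℝ)
    (hd : d ∈ Set.Ioo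
      (min (min (f (a.1, a.2)) (f (b.1, b.2))) (min (f (a.1, b.2)) (f (b.1, a.2))))
      (max (max (f (a.1, a.2)) (f (b.1, b.2))) (max (f (a.1, b.2)) (f (b.1, a.2))))) :
    ∃ c ∈ Set.Ioo a.1 b.1 ×ˢ Set.Ioo a.2 b.2, f c = d := by
  have haa : (a.1, a.2) ∈ Set.Icc a.1 b.1 ×ˢ Set.Icc a.2 b.2 :=
    ⟨⟨le_refl _, hab1.le⟩, le_refl _, hab2.le⟩
  have hbb : (b.1, b.2) ∈ Set.Icc a.1 b.1 ×ˢ Set.Icc a.2 b.2 :=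
    ⟨⟨hab1.le, le_refl _⟩, hab2.le, le_refl _⟩
  have hab' : (a.1, b.2) ∈ Set.Icc a.1 b.1 ×ˢ Set.Icc a.2 b.2 :=
    ⟨⟨le_refl _, hab1.le⟩, hab2.le, le_refl _⟩
  have hba : (b.1, a.2) ∈ Set.Icc a.1 b.1 ×ˢ Set.Icc a.2 b.2 :=
    ⟨⟨hab1.le, le_refl _⟩, le_refl _, hab2.le⟩
  -- a corner with value < d
  have hplt : ∃ p ∈ Set.Icc a.1 b.1 ×ˢ Set.Icc a.2 b.2, f p < d := by
    rcases min_lt_iff.mp hd.1 with h | h <;> rcases min_lt_iff.mp h with h' | h'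
    exacts [⟨_, haa, h'⟩, ⟨_, hbb, h'⟩, ⟨_, hab', h'⟩, ⟨_, hba, h'⟩]
  have hqgt : ∃ q ∈ Set.Icc a.1 b.1 ×ˢ Set.Icc a.2 b.2, d < f q := by
    rcases lt_max_iff.mp hd.2 with h | h <;> rcases lt_max_iff.mp h with h' | h'
    exacts [⟨_, haa, h'⟩, ⟨_, hbb, h'⟩, ⟨_, hab', h'⟩, ⟨_, hba, h'⟩]
  obtain ⟨p, hp, hpd⟩ := hplt
  obtain ⟨q, hq, hqd⟩ := hqgt
  obtain ⟨p', hp', hp'd⟩ := key_lt f a b hab1 hab2 hf d p hp hpd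
  obtain ⟨q', hq', hq'd⟩ : ∃ y ∈ Set.Ioo a.1 b.1 ×ˢ Set.Ioo a.2 b.2, d < f y := by
    obtain ⟨y, hy, hyd⟩ := key_lt (fun x => -f x) a b hab1 hab2 hf.neg (-d) q hq (by
      simpa using hqd)
    exact ⟨y, hy, by simpa using hyd⟩
  -- IVT along the segment from p' to q'
  set h : ℝ → ℝ × ℝ := fun s => (p'.1 + s * (q'.1 - p'.1), p'.2 + s * (q'.2 - p'.2)) with hhdef
  obtain ⟨⟨hp1a, hp1b⟩, hp2a, hp2b⟩ := hp'
  obtain ⟨⟨hq1a, hq1b⟩, hq2a, hq2b⟩ := hq'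
  have hmem : ∀ s ∈ Set.Icc (0:ℝ) 1, h s ∈ Set.Ioo a.1 b.1 ×ˢ Set.Ioo a.2 b.2 := by
    rintro s ⟨hs0, hs1⟩
    refine ⟨⟨?_, ?_⟩, ?_, ?_⟩ <;> simp only [hhdef] <;>
      nlinarith [mul_nonneg hs0 (sub_pos.2 hq1a).le, mul_nonneg hs0 (sub_pos.2 hq2a).le,
        mul_nonneg hs0 (sub_pos.2 hq1b).le, mul_nonneg hs0 (sub_pos.2 hq2b).le,
        mul_nonneg (sub_nonneg.2 hs1) (sub_pos.2 hp1a).le,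
        mul_nonneg (sub_nonneg.2 hs1) (sub_pos.2 hp2a).le,
        mul_nonneg (sub_nonneg.2 hs1) (sub_pos.2 hp1b).le,
        mul_nonneg (sub_nonneg.2 hs1) (sub_pos.2 hp2b).le]
  have hhc : Continuous h := by fun_prop
  have hφ : ContinuousOn (fun s => f (h s)) (Set.Icc (0:ℝ) 1) := by
    apply hf.comp hhc.continuousOn
    intro s hs
    exact (Set.prod_mono Set.Ioo_subset_Icc_self Set.Ioo_subset_Icc_self) (hmem s hs)
  have h0 : h 0 = p' := by simp [hhdef]
  have h1 : h 1 = q' := by simp [hhdef]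
  have hdmem : d ∈ Set.Icc (f (h 0)) (f (h 1)) := by
    rw [h0, h1]; exact ⟨hp'd.le, hq'd.le⟩
  obtain ⟨s, hs, hsd⟩ := intermediate_value_Icc zero_le_one hφ hdmem
  exact ⟨h s, hmem s hs, hsd⟩
end
end

section
/- Let f be a two-variable real function such that the iterated partial derivatives f₁₂ = ∂₂∂₁f and f₂₁ = ∂₁∂₂f exist in a neighbourhood of a ∈ ℝ² and are continuous at a. Then f is double differentiable at a and f'(a) = f₁₂(a) = f₂₁(a). -/
open Set Filter Topology MeasureTheory

noncomputable section

lemma abs_sub_le_of_mem_uIcc {t p q : ℝ} (ht : t ∈ Set.uIcc p q) : |t - p| ≤ |q - p| := by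
  rw [Set.mem_uIcc] at ht
  rcases ht with ⟨h1, h2⟩ | ⟨h1, h2⟩ <;>
    rcases abs_cases (q - p) with ⟨h3, h4⟩ | ⟨h3, h4⟩ <;>
    rw [abs_le] <;> constructor <;> linarith

lemma mvt_aux (g g' : ℝ → ℝ) (p q : ℝ) (h : p ≠ q)
    (hd : ∀ t ∈ Set.uIcc p q, HasDerivAt g (g' t) t) :
    ∃ c, |c - p| < |q - p| ∧ g q - g p = g' c * (q - p) := by
  rcases h.lt_or_gt with hpq | hpq
  · have hcont : ContinuousOn g (Set.Icc p q) := fun t ht =>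
      ((hd t (by rwa [Set.uIcc_of_le hpq.le])).continuousAt).continuousWithinAt
    obtain ⟨c, hc, hceq⟩ := exists_hasDerivAt_eq_slope g g' hpq hcont
      (fun t ht => hd t (by rw [Set.uIcc_of_le hpq.le]; exact Set.Ioo_subset_Icc_self ht))
    refine ⟨c, ?_, ?_⟩
    · rw [abs_of_pos (by linarith [hc.1] : (0:ℝ) < c - p), abs_of_pos (by linarith : (0:ℝ) < q - p)]
      linarith [hc.2]
    · have hne : q - p ≠ 0 := sub_ne_zero.mpr hpq.ne'
      rw [hceq]; field_simp
  · have hcont : ContinuousOn g (Set.Icc q p) := fun t ht =>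
      ((hd t (by rwa [Set.uIcc_of_ge hpq.le])).continuousAt).continuousWithinAt
    obtain ⟨c, hc, hceq⟩ := exists_hasDerivAt_eq_slope g g' hpq hcont
      (fun t ht => hd t (by rw [Set.uIcc_of_ge hpq.le]; exact Set.Ioo_subset_Icc_self ht))
    refine ⟨c, ?_, ?_⟩
    · rw [abs_of_neg (by linarith [hc.2] : c - p < 0), abs_of_neg (by linarith : q - p < 0)]
      linarith [hc.1]
    · have hne : p - q ≠ 0 := sub_ne_zero.mpr hpq.ne'
      rw [hceq]; field_simp; ring

lemma key12 (f f₁ f₁₂ : ℝ × ℝ → ℝ) (a : ℝ × ℝ) (U : Set (ℝ × ℝ)) (δ : ℝ)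
    (hR : ∀ y : ℝ × ℝ, |y.1 - a.1| ≤ δ → |y.2 - a.2| ≤ δ → y ∈ U)
    (h₁ : ∀ x ∈ U, HasDerivAt (fun t => f (t, x.2)) (f₁ x) x.1)
    (h₁₂ : ∀ x ∈ U, HasDerivAt (fun t => f₁ (x.1, t)) (f₁₂ x) x.2)
    (x : ℝ × ℝ) (hx1 : 0 < |x.1 - a.1|) (hx1' : |x.1 - a.1| ≤ δ)
    (hx2 : 0 < |x.2 - a.2|) (hx2' : |x.2 - a.2| ≤ δ) :
    ∃ c : ℝ × ℝ, |c.1 - a.1| < |x.1 - a.1| ∧ |c.2 - a.2| < |x.2 - a.2| ∧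
      dSlope f a x = f₁₂ c := by
  have hne1 : a.1 ≠ x.1 := fun h => by simp [h] at hx1
  have hne2 : a.2 ≠ x.2 := fun h => by simp [h] at hx2
  have ha2 : |a.2 - a.2| ≤ δ := by simpa using le_trans hx2.le hx2'
  obtain ⟨c₁, hc₁, heq₁⟩ := mvt_aux (fun t => f (t, x.2) - f (t, a.2))
      (fun t => f₁ (t, x.2) - f₁ (t, a.2)) a.1 x.1 hne1
      (fun t ht => HasDerivAt.sub
        (h₁ (t, x.2) (hR _ (le_trans (abs_sub_le_of_mem_uIcc ht) hx1') hx2'))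
        (h₁ (t, a.2) (hR _ (le_trans (abs_sub_le_of_mem_uIcc ht) hx1') ha2)))
  have hc₁δ : |c₁ - a.1| ≤ δ := le_trans hc₁.le hx1'
  obtain ⟨c₂, hc₂, heq₂⟩ := mvt_aux (fun s => f₁ (c₁, s)) (fun s => f₁₂ (c₁, s)) a.2 x.2 hne2
      (fun s hs => h₁₂ (c₁, s) (hR _ hc₁δ (le_trans (abs_sub_le_of_mem_uIcc hs) hx2')))
  refine ⟨(c₁, c₂), hc₁, hc₂, ?_⟩
  have hd : dDiff f a x = f₁₂ (c₁, c₂) * ((x.1 - a.1) * (x.2 - a.2)) := by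
    have : dDiff f a x = (f (x.1, x.2) - f (x.1, a.2)) - (f (a.1, x.2) - f (a.1, a.2)) := by
      simp [dDiff]; ring
    rw [this, heq₁, heq₂]; ring
  have hne : (x.1 - a.1) * (x.2 - a.2) ≠ 0 :=
    mul_ne_zero (fun h => by simp [h] at hx1) (fun h => by simp [h] at hx2)
  rw [dSlope, hd, mul_div_assoc, div_self hne, mul_one]

lemma key21 (f f₂ f₂₁ : ℝ × ℝ → ℝ) (a : ℝ × ℝ) (U : Set (ℝ × ℝ)) (δ : ℝ)
    (hR : ∀ y : ℝ × ℝ, |y.1 - a.1| ≤ δ → |y.2 - a.2| ≤ δ → y ∈ U)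
    (h₂ : ∀ x ∈ U, HasDerivAt (fun t => f (x.1, t)) (f₂ x) x.2)
    (h₂₁ : ∀ x ∈ U, HasDerivAt (fun t => f₂ (t, x.2)) (f₂₁ x) x.1)
    (x : ℝ × ℝ) (hx1 : 0 < |x.1 - a.1|) (hx1' : |x.1 - a.1| ≤ δ)
    (hx2 : 0 < |x.2 - a.2|) (hx2' : |x.2 - a.2| ≤ δ) :
    ∃ c : ℝ × ℝ, |c.1 - a.1| < |x.1 - a.1| ∧ |c.2 - a.2| < |x.2 - a.2| ∧
      dSlope f a x = f₂₁ c := by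
  have hne1 : a.1 ≠ x.1 := fun h => by simp [h] at hx1
  have hne2 : a.2 ≠ x.2 := fun h => by simp [h] at hx2
  have ha1 : |a.1 - a.1| ≤ δ := by simpa using le_trans hx1.le hx1'
  obtain ⟨c₂, hc₂, heq₂⟩ := mvt_aux (fun s => f (x.1, s) - f (a.1, s))
      (fun s => f₂ (x.1, s) - f₂ (a.1, s)) a.2 x.2 hne2
      (fun s hs => HasDerivAt.sub
        (h₂ (x.1, s) (hR _ hx1' (le_trans (abs_sub_le_of_mem_uIcc hs) hx2')))
        (h₂ (a.1, s) (hR _ ha1 (le_trans (abs_sub_le_of_mem_uIcc hs) hx2'))))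
  have hc₂δ : |c₂ - a.2| ≤ δ := le_trans hc₂.le hx2'
  obtain ⟨c₁, hc₁, heq₁⟩ := mvt_aux (fun t => f₂ (t, c₂)) (fun t => f₂₁ (t, c₂)) a.1 x.1 hne1
      (fun t ht => h₂₁ (t, c₂) (hR _ (le_trans (abs_sub_le_of_mem_uIcc ht) hx1') hc₂δ))
  refine ⟨(c₁, c₂), hc₁, hc₂, ?_⟩
  have hd : dDiff f a x = f₂₁ (c₁, c₂) * ((x.1 - a.1) * (x.2 - a.2)) := by
    have : dDiff f a x = (f (x.1, x.2) - f (x.1, a.2)) - (f (a.1, x.2) - f (a.1, a.2)) := by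
      simp [dDiff]; ring
    rw [this]
    have h2' : f (x.1, x.2) - f (x.1, a.2) - (f (a.1, x.2) - f (a.1, a.2)) =
        (f (x.1, x.2) - f (a.1, x.2)) - (f (x.1, a.2) - f (a.1, a.2)) := by ring
    rw [h2', heq₂, heq₁]; ring
  have hne : (x.1 - a.1) * (x.2 - a.2) ≠ 0 :=
    mul_ne_zero (fun h => by simp [h] at hx1) (fun h => by simp [h] at hx2)
  rw [dSlope, hd, mul_div_assoc, div_self hne, mul_one]

lemma lim_of_key (f g : ℝ × ℝ → ℝ) (a : ℝ × ℝ) (hc : ContinuousAt g a)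
    (δU : ℝ) (hδU : 0 < δU)
    (hkey : ∀ x : ℝ × ℝ, 0 < |x.1 - a.1| → |x.1 - a.1| ≤ δU → 0 < |x.2 - a.2| →
      |x.2 - a.2| ≤ δU →
      ∃ c : ℝ × ℝ, |c.1 - a.1| < |x.1 - a.1| ∧ |c.2 - a.2| < |x.2 - a.2| ∧
        dSlope f a x = g c) :
    HasDoubleDerivAt f a (g a) := by
  intro ε hε
  obtain ⟨δc, hδc, hball⟩ := Metric.continuousAt_iff.mp hc ε hε
  refine ⟨min δU δc, lt_min hδU hδc, min δU δc, lt_min hδU hδc, fun x _ h1 h1' h2 h2' => ?_⟩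
  obtain ⟨c, hc1, hc2, heq⟩ := hkey x h1 (le_of_lt (lt_of_lt_of_le h1' (min_le_left _ _)))
    h2 (le_of_lt (lt_of_lt_of_le h2' (min_le_left _ _)))
  simp only [heq]
  have : dist c a < δc := by
    rw [Prod.dist_eq, Real.dist_eq, Real.dist_eq]
    exact max_lt (lt_of_lt_of_le (lt_trans hc1 h1') (min_le_right _ _))
      (lt_of_lt_of_le (lt_trans hc2 h2') (min_le_right _ _))
  simpa [Real.dist_eq] using hball this

lemma dLim_unique (g : ℝ × ℝ → ℝ) (a : ℝ × ℝ) (L M : ℝ)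
    (hL : DoubleLim g a L) (hM : DoubleLim g a M) : L = M := by
  by_contra h
  have hε : 0 < |L - M| / 2 := by
    have : L - M ≠ 0 := sub_ne_zero.mpr h
    positivity
  obtain ⟨δ₁, hδ₁, δ₂, hδ₂, hL'⟩ := hL _ hε
  obtain ⟨δ₃, hδ₃, δ₄, hδ₄, hM'⟩ := hM _ hε
  set m := min (min δ₁ δ₂) (min δ₃ δ₄) / 2 with hm
  have hmpos : 0 < m := by positivity
  set x : ℝ × ℝ := (a.1 + m, a.2 + m) with hx
  have habs : |x.1 - a.1| = m ∧ |x.2 - a.2| = m := by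
    constructor <;> simp [hx, abs_of_pos hmpos]
  have h1 : |g x - L| < |L - M| / 2 := hL' x (Set.mem_univ _)
    (by rw [habs.1]; exact hmpos) (by rw [habs.1]; simp [hm]; nlinarith [min_le_left δ₁ δ₂, min_le_left (min δ₁ δ₂) (min δ₃ δ₄)])
    (by rw [habs.2]; exact hmpos) (by rw [habs.2]; simp [hm]; nlinarith [min_le_right δ₁ δ₂, min_le_left (min δ₁ δ₂) (min δ₃ δ₄)])
  have h2 : |g x - M| < |L - M| / 2 := hM' x (Set.mem_univ _)
    (by rw [habs.1]; exact hmpos) (by rw [habs.1]; simp [hm]; nlinarith [min_le_left δ₃ δ₄, min_le_right (min δ₁ δ₂) (min δ₃ δ₄)])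
    (by rw [habs.2]; exact hmpos) (by rw [habs.2]; simp [hm]; nlinarith [min_le_right δ₃ δ₄, min_le_right (min δ₁ δ₂) (min δ₃ δ₄)])
  have := abs_sub_abs_le_abs_sub L M
  rcases abs_cases (g x - L) with ⟨e1, _⟩ | ⟨e1, _⟩ <;>
  rcases abs_cases (g x - M) with ⟨e2, _⟩ | ⟨e2, _⟩ <;>
  rcases abs_cases (L - M) with ⟨e3, _⟩ | ⟨e3, _⟩ <;> linarith

/-- Schwarz: if the iterated partial derivatives `f₁₂ = ∂₂∂₁f` and
`f₂₁ = ∂₁∂₂f` exist in a neighbourhood of `a` and are continuous at `a`, then `f`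
is double differentiable at `a` with `f'(a) = f₁₂(a) = f₂₁(a)`. -/
theorem stmt4 (f f₁ f₂ f₁₂ f₂₁ : ℝ × ℝ → ℝ) (a : ℝ × ℝ) (U : Set (ℝ × ℝ))
    (hU : U ∈ nhds a)
    (h₁ : ∀ x ∈ U, HasDerivAt (fun t => f (t, x.2)) (f₁ x) x.1)
    (h₂ : ∀ x ∈ U, HasDerivAt (fun t => f (x.1, t)) (f₂ x) x.2)
    (h₁₂ : ∀ x ∈ U, HasDerivAt (fun t => f₁ (x.1, t)) (f₁₂ x) x.2)
    (h₂₁ : ∀ x ∈ U, HasDerivAt (fun t => f₂ (t, x.2)) (f₂₁ x) x.1)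
    (hc₁₂ : ContinuousAt f₁₂ a) (hc₂₁ : ContinuousAt f₂₁ a) :
    f₁₂ a = f₂₁ a ∧ HasDoubleDerivAt f a (f₁₂ a) := by
  obtain ⟨r, hr, hball⟩ := Metric.mem_nhds_iff.mp hU
  have hR : ∀ y : ℝ × ℝ, |y.1 - a.1| ≤ r / 2 → |y.2 - a.2| ≤ r / 2 → y ∈ U := by
    intro y hy1 hy2
    apply hball
    rw [Metric.mem_ball, Prod.dist_eq, Real.dist_eq, Real.dist_eq]
    exact max_lt (lt_of_le_of_lt hy1 (by linarith)) (lt_of_le_of_lt hy2 (by linarith))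
  have L1 : HasDoubleDerivAt f a (f₁₂ a) :=
    lim_of_key f f₁₂ a hc₁₂ (r / 2) (by linarith)
      (fun x h1 h1' h2 h2' => key12 f f₁ f₁₂ a U (r / 2) hR h₁ h₁₂ x h1 h1' h2 h2')
  have L2 : HasDoubleDerivAt f a (f₂₁ a) :=
    lim_of_key f f₂₁ a hc₂₁ (r / 2) (by linarith)
      (fun x h1 h1' h2 h2' => key21 f f₂ f₂₁ a U (r / 2) hR h₂ h₂₁ x h1 h1' h2 h2')
  exact ⟨dLim_unique _ a _ _ L1 L2, L1⟩
end
end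

section
/- Let f be a two-variable real function defined at a ∈ ℝ². If f is double differentiable at a, then f is double continuous at a. -/
open Set Filter Topology MeasureTheory

noncomputable section

/-- `f` is double continuous at `a` (interior version). -/
def DoubleContinuousAt (f : ℝ × ℝ → ℝ) (a : ℝ × ℝ) : Prop :=
  ∃ δ₁ > 0, ∃ δ₂ > 0,
    (∀ x₁ ∈ Set.Ioo (a.1 - δ₁) (a.1 + δ₁),
      Filter.Tendsto (fun x₂ => dDiff f a (x₁, x₂)) (nhdsWithin a.2 {a.2}ᶜ) (nhds 0)) ∧
    (∀ x₂ ∈ Set.Ioo (a.2 - δ₂) (a.2 + δ₂),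
      Filter.Tendsto (fun x₁ => dDiff f a (x₁, x₂)) (nhdsWithin a.1 {a.1}ᶜ) (nhds 0))

/-- double differentiability at a point implies double continuity there. -/
theorem stmt6 (f : ℝ × ℝ → ℝ) (a : ℝ × ℝ) (L : ℝ)
    (hf : HasDoubleDerivAt f a L) :
    DoubleContinuousAt f a := by
  obtain ⟨δ₁, hδ₁, δ₂, hδ₂, hdd⟩ := hf 1 one_pos
  refine ⟨δ₁, hδ₁, δ₂, hδ₂, ?_, ?_⟩
  · intro x₁ hx₁
    rcases eq_or_ne x₁ a.1 with h | h
    · have hzero : (fun x₂ => dDiff f a (x₁, x₂)) = fun _ => (0 : ℝ) := by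
        funext x₂; simp only [dDiff, h]; ring
      rw [hzero]; exact tendsto_const_nhds
    · have hc : 0 < |x₁ - a.1| := abs_pos.mpr (sub_ne_zero.mpr h)
      have hlt : |x₁ - a.1| < δ₁ :=
        abs_lt.mpr ⟨by linarith [hx₁.1], by linarith [hx₁.2]⟩
      rw [Metric.tendsto_nhdsWithin_nhds]
      intro ε hε
      have hLpos : (0 : ℝ) < |L| + 1 := by positivity
      have hC : (0 : ℝ) < (|L| + 1) * |x₁ - a.1| := by positivity
      refine ⟨min δ₂ (ε / ((|L| + 1) * |x₁ - a.1|)), by positivity, ?_⟩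
      intro x₂ hx₂ hdist
      have hne : x₂ ≠ a.2 := hx₂
      have h2 : 0 < |x₂ - a.2| := abs_pos.mpr (sub_ne_zero.mpr hne)
      rw [Real.dist_eq] at hdist
      have h2' : |x₂ - a.2| < δ₂ := lt_of_lt_of_le hdist (min_le_left _ _)
      have h2'' : |x₂ - a.2| < ε / ((|L| + 1) * |x₁ - a.1|) :=
        lt_of_lt_of_le hdist (min_le_right _ _)
      have hs := hdd (x₁, x₂) (Set.mem_univ _) hc hlt h2 h2'
      have hsb : |dSlope f a (x₁, x₂)| < |L| + 1 := by
        have := abs_sub_abs_le_abs_sub (dSlope f a (x₁, x₂)) L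
        linarith
      have hden : ((x₁, x₂).1 - a.1) * ((x₁, x₂).2 - a.2) ≠ 0 :=
        mul_ne_zero (sub_ne_zero.mpr h) (sub_ne_zero.mpr hne)
      have hkey : dDiff f a (x₁, x₂)
          = dSlope f a (x₁, x₂) * ((x₁ - a.1) * (x₂ - a.2)) := by
        rw [dSlope, div_mul_cancel₀ _ hden]
      rw [Real.dist_eq, sub_zero, hkey, abs_mul, abs_mul]
      have hmul : |x₂ - a.2| * ((|L| + 1) * |x₁ - a.1|) < ε :=
        (lt_div_iff₀ hC).mp h2''
      nlinarith [abs_nonneg (dSlope f a (x₁, x₂)), abs_nonneg (x₂ - a.2),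
        abs_nonneg (x₁ - a.1)]
  · intro x₂ hx₂
    rcases eq_or_ne x₂ a.2 with h | h
    · have hzero : (fun x₁ => dDiff f a (x₁, x₂)) = fun _ => (0 : ℝ) := by
        funext x₁; simp only [dDiff, h]; ring
      rw [hzero]; exact tendsto_const_nhds
    · have hc : 0 < |x₂ - a.2| := abs_pos.mpr (sub_ne_zero.mpr h)
      have hlt : |x₂ - a.2| < δ₂ :=
        abs_lt.mpr ⟨by linarith [hx₂.1], by linarith [hx₂.2]⟩
      rw [Metric.tendsto_nhdsWithin_nhds]
      intro ε hε
      have hLpos : (0 : ℝ) < |L| + 1 := by positivity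
      have hC : (0 : ℝ) < (|L| + 1) * |x₂ - a.2| := by positivity
      refine ⟨min δ₁ (ε / ((|L| + 1) * |x₂ - a.2|)), by positivity, ?_⟩
      intro x₁ hx₁ hdist
      have hne : x₁ ≠ a.1 := hx₁
      have h1 : 0 < |x₁ - a.1| := abs_pos.mpr (sub_ne_zero.mpr hne)
      rw [Real.dist_eq] at hdist
      have h1' : |x₁ - a.1| < δ₁ := lt_of_lt_of_le hdist (min_le_left _ _)
      have h1'' : |x₁ - a.1| < ε / ((|L| + 1) * |x₂ - a.2|) :=
        lt_of_lt_of_le hdist (min_le_right _ _)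
      have hs := hdd (x₁, x₂) (Set.mem_univ _) h1 h1' hc hlt
      have hsb : |dSlope f a (x₁, x₂)| < |L| + 1 := by
        have := abs_sub_abs_le_abs_sub (dSlope f a (x₁, x₂)) L
        linarith
      have hden : ((x₁, x₂).1 - a.1) * ((x₁, x₂).2 - a.2) ≠ 0 :=
        mul_ne_zero (sub_ne_zero.mpr hne) (sub_ne_zero.mpr h)
      have hkey : dDiff f a (x₁, x₂)
          = dSlope f a (x₁, x₂) * ((x₁ - a.1) * (x₂ - a.2)) := by
        rw [dSlope, div_mul_cancel₀ _ hden]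
      rw [Real.dist_eq, sub_zero, hkey, abs_mul, abs_mul]
      have hmul : |x₁ - a.1| * ((|L| + 1) * |x₂ - a.2|) < ε :=
        (lt_div_iff₀ hC).mp h1''
      nlinarith [abs_nonneg (dSlope f a (x₁, x₂)), abs_nonneg (x₂ - a.2),
        abs_nonneg (x₁ - a.1)]
end
end

section
/- Let a, b ∈ ℝ² with a < b, let x ∈ (a,b), and let f : [a,b] → ℝ. Define m₁ := m_a^x(f), m₂ := m_x^b(f), m₃ := Δ_{(a₁,x₂)}^{(x₁,b₂)}(f)/((x₁−a₁)(b₂−x₂)) and m₄ := Δ_{(x₁,a₂)}^{(b₁,x₂)}(f)/((b₁−x₁)(x₂−a₂)). Then either all of m₁, m₂, m₃, m₄ are equal to m_a^b(f), or at least one of them is strictly greater than m_a^b(f) and at least one of them is strictly less than m_a^b(f). -/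
open Set Filter Topology MeasureTheory

noncomputable section

set_option maxHeartbeats 1000000 in
/-- either all four partial mean slopes equal `m_a^b(f)`, or at least
one is strictly greater and at least one strictly smaller. -/
theorem stmt7 (f : ℝ × ℝ → ℝ) (a b x : ℝ × ℝ)
    (hab1 : a.1 < b.1) (hab2 : a.2 < b.2)
    (hx : x ∈ Set.Ioo a.1 b.1 ×ˢ Set.Ioo a.2 b.2) :
    (dSlope f a x = dSlope f a b ∧ dSlope f x b = dSlope f a b ∧
      dDiff f (a.1, x.2) (x.1, b.2) / ((x.1 - a.1) * (b.2 - x.2)) = dSlope f a b ∧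
      dDiff f (x.1, a.2) (b.1, x.2) / ((b.1 - x.1) * (x.2 - a.2)) = dSlope f a b) ∨
    ((dSlope f a b < dSlope f a x ∨ dSlope f a b < dSlope f x b ∨
      dSlope f a b < dDiff f (a.1, x.2) (x.1, b.2) / ((x.1 - a.1) * (b.2 - x.2)) ∨
      dSlope f a b < dDiff f (x.1, a.2) (b.1, x.2) / ((b.1 - x.1) * (x.2 - a.2))) ∧
     (dSlope f a x < dSlope f a b ∨ dSlope f x b < dSlope f a b ∨
      dDiff f (a.1, x.2) (x.1, b.2) / ((x.1 - a.1) * (b.2 - x.2)) < dSlope f a b ∨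
      dDiff f (x.1, a.2) (b.1, x.2) / ((b.1 - x.1) * (x.2 - a.2)) < dSlope f a b)) := by

  obtain ⟨⟨hx1, hx1'⟩, hx2, hx2'⟩ := hx
  set m := dSlope f a b with hm
  set m1 := dSlope f a x with hm1
  set m2 := dSlope f x b with hm2
  set m3 := dDiff f (a.1, x.2) (x.1, b.2) / ((x.1 - a.1) * (b.2 - x.2)) with hm3
  set m4 := dDiff f (x.1, a.2) (b.1, x.2) / ((b.1 - x.1) * (x.2 - a.2)) with hm4
  have A1 : (0:ℝ) < (x.1 - a.1) * (x.2 - a.2) := mul_pos (by linarith) (by linarith)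
  have A2 : (0:ℝ) < (b.1 - x.1) * (b.2 - x.2) := mul_pos (by linarith) (by linarith)
  have A3 : (0:ℝ) < (x.1 - a.1) * (b.2 - x.2) := mul_pos (by linarith) (by linarith)
  have A4 : (0:ℝ) < (b.1 - x.1) * (x.2 - a.2) := mul_pos (by linarith) (by linarith)
  have A : (0:ℝ) < (b.1 - a.1) * (b.2 - a.2) := mul_pos (by linarith) (by linarith)
  have e1 : m1 * ((x.1 - a.1) * (x.2 - a.2)) = dDiff f a x := div_mul_cancel₀ _ A1.ne'
  have e2 : m2 * ((b.1 - x.1) * (b.2 - x.2)) = dDiff f x b := div_mul_cancel₀ _ A2.ne'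
  have e3 : m3 * ((x.1 - a.1) * (b.2 - x.2)) = dDiff f (a.1, x.2) (x.1, b.2) :=
    div_mul_cancel₀ _ A3.ne'
  have e4 : m4 * ((b.1 - x.1) * (x.2 - a.2)) = dDiff f (x.1, a.2) (b.1, x.2) :=
    div_mul_cancel₀ _ A4.ne'
  have e : m * ((b.1 - a.1) * (b.2 - a.2)) = dDiff f a b := div_mul_cancel₀ _ A.ne'
  have key : (m1 - m) * ((x.1 - a.1) * (x.2 - a.2)) + (m2 - m) * ((b.1 - x.1) * (b.2 - x.2))
      + (m3 - m) * ((x.1 - a.1) * (b.2 - x.2)) + (m4 - m) * ((b.1 - x.1) * (x.2 - a.2)) = 0 := by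
    have hsum : dDiff f a x + dDiff f x b + dDiff f (a.1, x.2) (x.1, b.2)
        + dDiff f (x.1, a.2) (b.1, x.2) = dDiff f a b := by
      simp only [dDiff]; ring
    have h2 : m1 * ((x.1 - a.1) * (x.2 - a.2)) + m2 * ((b.1 - x.1) * (b.2 - x.2))
        + m3 * ((x.1 - a.1) * (b.2 - x.2)) + m4 * ((b.1 - x.1) * (x.2 - a.2))
        = m * ((b.1 - a.1) * (b.2 - a.2)) := by
      rw [e1, e2, e3, e4, e, hsum]
    linear_combination h2
  by_cases h : m1 = m ∧ m2 = m ∧ m3 = m ∧ m4 = m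
  · exact Or.inl ⟨h.1, h.2.1, h.2.2.1, h.2.2.2⟩
  · refine Or.inr ⟨?_, ?_⟩
    · by_contra hc
      push_neg at hc
      obtain ⟨l1, l2, l3, l4⟩ := hc
      have t1 : (m1 - m) * ((x.1 - a.1) * (x.2 - a.2)) ≤ 0 :=
        mul_nonpos_of_nonpos_of_nonneg (by linarith) A1.le
      have t2 : (m2 - m) * ((b.1 - x.1) * (b.2 - x.2)) ≤ 0 :=
        mul_nonpos_of_nonpos_of_nonneg (by linarith) A2.le
      have t3 : (m3 - m) * ((x.1 - a.1) * (b.2 - x.2)) ≤ 0 :=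
        mul_nonpos_of_nonpos_of_nonneg (by linarith) A3.le
      have t4 : (m4 - m) * ((b.1 - x.1) * (x.2 - a.2)) ≤ 0 :=
        mul_nonpos_of_nonpos_of_nonneg (by linarith) A4.le
      rcases not_and_or.1 h with h' | h'
      · have : (m1 - m) * ((x.1 - a.1) * (x.2 - a.2)) < 0 :=
          mul_neg_of_neg_of_pos (by cases lt_or_eq_of_le l1 with
            | inl h'' => linarith | inr h'' => exact absurd h'' h') A1
        linarith
      rcases not_and_or.1 h' with h'' | h''
      · have : (m2 - m) * ((b.1 - x.1) * (b.2 - x.2)) < 0 :=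
          mul_neg_of_neg_of_pos (by cases lt_or_eq_of_le l2 with
            | inl h3 => linarith | inr h3 => exact absurd h3 h'') A2
        linarith
      rcases not_and_or.1 h'' with h3 | h4
      · have : (m3 - m) * ((x.1 - a.1) * (b.2 - x.2)) < 0 :=
          mul_neg_of_neg_of_pos (by cases lt_or_eq_of_le l3 with
            | inl h5 => linarith | inr h5 => exact absurd h5 h3) A3
        linarith
      · have : (m4 - m) * ((b.1 - x.1) * (x.2 - a.2)) < 0 :=
          mul_neg_of_neg_of_pos (by cases lt_or_eq_of_le l4 with
            | inl h5 => linarith | inr h5 => exact absurd h5 h4) A4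
        linarith
    · by_contra hc
      push_neg at hc
      obtain ⟨l1, l2, l3, l4⟩ := hc
      have t1 : 0 ≤ (m1 - m) * ((x.1 - a.1) * (x.2 - a.2)) :=
        mul_nonneg (by linarith) A1.le
      have t2 : 0 ≤ (m2 - m) * ((b.1 - x.1) * (b.2 - x.2)) :=
        mul_nonneg (by linarith) A2.le
      have t3 : 0 ≤ (m3 - m) * ((x.1 - a.1) * (b.2 - x.2)) :=
        mul_nonneg (by linarith) A3.le
      have t4 : 0 ≤ (m4 - m) * ((b.1 - x.1) * (x.2 - a.2)) :=
        mul_nonneg (by linarith) A4.le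
      rcases not_and_or.1 h with h' | h'
      · have : 0 < (m1 - m) * ((x.1 - a.1) * (x.2 - a.2)) :=
          mul_pos (by cases lt_or_eq_of_le l1 with
            | inl h'' => linarith | inr h'' => exact absurd h''.symm h') A1
        linarith
      rcases not_and_or.1 h' with h'' | h''
      · have : 0 < (m2 - m) * ((b.1 - x.1) * (b.2 - x.2)) :=
          mul_pos (by cases lt_or_eq_of_le l2 with
            | inl h3 => linarith | inr h3 => exact absurd h3.symm h'') A2
        linarith
      rcases not_and_or.1 h'' with h3 | h4
      · have : 0 < (m3 - m) * ((x.1 - a.1) * (b.2 - x.2)) :=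
          mul_pos (by cases lt_or_eq_of_le l3 with
            | inl h5 => linarith | inr h5 => exact absurd h5.symm h3) A3
        linarith
      · have : 0 < (m4 - m) * ((b.1 - x.1) * (x.2 - a.2)) :=
          mul_pos (by cases lt_or_eq_of_le l4 with
            | inl h5 => linarith | inr h5 => exact absurd h5.symm h4) A4
        linarith
end
end

section
/- Let a, b ∈ ℝ² with a < b and let f : (a,b) → ℝ be double differentiable at c ∈ (a,b). Let (a(n)) be a componentwise nondecreasing sequence and (b(n)) a componentwise nonincreasing sequence in (a,b), both converging to c, satisfying one of: (i) a(n) < c < b(n) for all n; (ii) a(n) < c for all n and b(n) = c for all sufficiently large n; (iii) c < b(n) for all n and a(n) = c for all sufficiently large n. Then m_{a(n)}^{b(n)}(f) → f'(c) as n → ∞. -/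
open Set Filter Topology MeasureTheory

noncomputable section

private lemma corner_bound (f : ℝ × ℝ → ℝ) (c : ℝ × ℝ) (L ε δ1 δ2 : ℝ) (hε : 0 < ε)
    (hd : ∀ x : ℝ × ℝ, 0 < |x.1 - c.1| → |x.1 - c.1| < δ1 → 0 < |x.2 - c.2| →
      |x.2 - c.2| < δ2 → |dSlope f c x - L| < ε)
    (x : ℝ × ℝ) (h1 : |x.1 - c.1| < δ1) (h2 : |x.2 - c.2| < δ2) :
    |dDiff f c x - L * ((x.1 - c.1) * (x.2 - c.2))| ≤ ε * (|x.1 - c.1| * |x.2 - c.2|) := by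
  rcases eq_or_ne x.1 c.1 with h | h
  · simp [dDiff, h]
  rcases eq_or_ne x.2 c.2 with h' | h'
  · simp [dDiff, h']
  have h1p : 0 < |x.1 - c.1| := abs_pos.mpr (sub_ne_zero.mpr h)
  have h2p : 0 < |x.2 - c.2| := abs_pos.mpr (sub_ne_zero.mpr h')
  have hs := hd x h1p h1 h2p h2
  have hden : (x.1 - c.1) * (x.2 - c.2) ≠ 0 :=
    mul_ne_zero (sub_ne_zero.mpr h) (sub_ne_zero.mpr h')
  have heq : |dDiff f c x - L * ((x.1 - c.1) * (x.2 - c.2))|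
      = |dSlope f c x - L| * |(x.1 - c.1) * (x.2 - c.2)| := by
    rw [← abs_mul]
    congr 1
    rw [dSlope]
    field_simp
  rw [heq, abs_mul]
  exact mul_le_mul_of_nonneg_right hs.le (by positivity)

private lemma slope_bound (f : ℝ × ℝ → ℝ) (c : ℝ × ℝ) (L ε δ1 δ2 : ℝ) (hε : 0 < ε)
    (hd : ∀ x : ℝ × ℝ, 0 < |x.1 - c.1| → |x.1 - c.1| < δ1 → 0 < |x.2 - c.2| →
      |x.2 - c.2| < δ2 → |dSlope f c x - L| < ε)
    (p q : ℝ × ℝ) (hp1 : p.1 ≤ c.1) (hp2 : p.2 ≤ c.2) (hq1 : c.1 ≤ q.1) (hq2 : c.2 ≤ q.2)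
    (h1 : p.1 < q.1) (h2 : p.2 < q.2)
    (hpd1 : |p.1 - c.1| < δ1) (hpd2 : |p.2 - c.2| < δ2)
    (hqd1 : |q.1 - c.1| < δ1) (hqd2 : |q.2 - c.2| < δ2) :
    |dSlope f p q - L| ≤ ε := by
  have hD : 0 < (q.1 - p.1) * (q.2 - p.2) := mul_pos (by linarith) (by linarith)
  have ap1 : |p.1 - c.1| = c.1 - p.1 := by
    rw [abs_sub_comm, abs_of_nonneg (sub_nonneg.mpr hp1)]
  have ap2 : |p.2 - c.2| = c.2 - p.2 := by
    rw [abs_sub_comm, abs_of_nonneg (sub_nonneg.mpr hp2)]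
  have aq1 : |q.1 - c.1| = q.1 - c.1 := abs_of_nonneg (sub_nonneg.mpr hq1)
  have aq2 : |q.2 - c.2| = q.2 - c.2 := abs_of_nonneg (sub_nonneg.mpr hq2)
  have bq : |dDiff f c q - L * ((q.1 - c.1) * (q.2 - c.2))|
      ≤ ε * ((q.1 - c.1) * (q.2 - c.2)) := by
    have := corner_bound f c L ε δ1 δ2 hε hd q hqd1 hqd2
    rwa [aq1, aq2] at this
  have bp : |dDiff f c p - L * ((p.1 - c.1) * (p.2 - c.2))|
      ≤ ε * ((c.1 - p.1) * (c.2 - p.2)) := by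
    have := corner_bound f c L ε δ1 δ2 hε hd p hpd1 hpd2
    rwa [ap1, ap2] at this
  have bx : |dDiff f c (p.1, q.2) - L * ((p.1 - c.1) * (q.2 - c.2))|
      ≤ ε * ((c.1 - p.1) * (q.2 - c.2)) := by
    have := corner_bound f c L ε δ1 δ2 hε hd (p.1, q.2) hpd1 hqd2
    rwa [show ((p.1, q.2) : ℝ × ℝ).1 = p.1 from rfl,
      show ((p.1, q.2) : ℝ × ℝ).2 = q.2 from rfl, ap1, aq2] at this
  have by' : |dDiff f c (q.1, p.2) - L * ((q.1 - c.1) * (p.2 - c.2))|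
      ≤ ε * ((q.1 - c.1) * (c.2 - p.2)) := by
    have := corner_bound f c L ε δ1 δ2 hε hd (q.1, p.2) hqd1 hpd2
    rwa [show ((q.1, p.2) : ℝ × ℝ).1 = q.1 from rfl,
      show ((q.1, p.2) : ℝ × ℝ).2 = p.2 from rfl, aq1, ap2] at this
  have key : dDiff f p q - L * ((q.1 - p.1) * (q.2 - p.2)) =
      (dDiff f c q - L * ((q.1 - c.1) * (q.2 - c.2)))
      + (dDiff f c p - L * ((p.1 - c.1) * (p.2 - c.2)))
      - (dDiff f c (p.1, q.2) - L * ((p.1 - c.1) * (q.2 - c.2)))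
      - (dDiff f c (q.1, p.2) - L * ((q.1 - c.1) * (p.2 - c.2))) := by
    simp only [dDiff]
    ring
  have hkey2 : |dDiff f p q - L * ((q.1 - p.1) * (q.2 - p.2))|
      ≤ ε * ((q.1 - p.1) * (q.2 - p.2)) := by
    have hsum : ε * ((q.1 - c.1) * (q.2 - c.2)) + ε * ((c.1 - p.1) * (c.2 - p.2))
        + ε * ((c.1 - p.1) * (q.2 - c.2)) + ε * ((q.1 - c.1) * (c.2 - p.2))
        = ε * ((q.1 - p.1) * (q.2 - p.2)) := by ring
    obtain ⟨e1, e2⟩ := abs_le.mp bq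
    obtain ⟨e3, e4⟩ := abs_le.mp bp
    obtain ⟨e5, e6⟩ := abs_le.mp bx
    obtain ⟨e7, e8⟩ := abs_le.mp by'
    rw [key, abs_le]
    constructor <;> linarith
  have hrw : dSlope f p q - L =
      (dDiff f p q - L * ((q.1 - p.1) * (q.2 - p.2))) / ((q.1 - p.1) * (q.2 - p.2)) := by
    rw [dSlope]
    rw [sub_div, mul_div_cancel_right₀ _ hD.ne']
  rw [hrw, abs_div, abs_of_pos hD, div_le_iff₀ hD]
  calc |dDiff f p q - L * ((q.1 - p.1) * (q.2 - p.2))|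
      ≤ ε * ((q.1 - p.1) * (q.2 - p.2)) := hkey2
    _ = ε * ((q.1 - p.1) * (q.2 - p.2)) := rfl

/-- squeezing sequences of double mean slopes converge to the double
derivative. -/
theorem stmt8 (f : ℝ × ℝ → ℝ) (a b c : ℝ × ℝ) (L : ℝ)
    (hab1 : a.1 < b.1) (hab2 : a.2 < b.2)
    (hc : c ∈ Set.Ioo a.1 b.1 ×ˢ Set.Ioo a.2 b.2)
    (hdiff : HasDoubleDerivAt f c L)
    (A B : ℕ → ℝ × ℝ)
    (hA : ∀ n, A n ∈ Set.Ioo a.1 b.1 ×ˢ Set.Ioo a.2 b.2)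
    (hB : ∀ n, B n ∈ Set.Ioo a.1 b.1 ×ˢ Set.Ioo a.2 b.2)
    (hAmono : ∀ n, (A n).1 ≤ (A (n + 1)).1 ∧ (A n).2 ≤ (A (n + 1)).2)
    (hBmono : ∀ n, (B (n + 1)).1 ≤ (B n).1 ∧ (B (n + 1)).2 ≤ (B n).2)
    (hAlim : Filter.Tendsto A Filter.atTop (nhds c))
    (hBlim : Filter.Tendsto B Filter.atTop (nhds c))
    (hcase :
      (∀ n, ((A n).1 < c.1 ∧ (A n).2 < c.2) ∧ (c.1 < (B n).1 ∧ c.2 < (B n).2)) ∨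
      ((∀ n, (A n).1 < c.1 ∧ (A n).2 < c.2) ∧ ∃ N, ∀ n ≥ N, B n = c) ∨
      ((∀ n, c.1 < (B n).1 ∧ c.2 < (B n).2) ∧ ∃ N, ∀ n ≥ N, A n = c)) :
    Filter.Tendsto (fun n => dSlope f (A n) (B n)) Filter.atTop (nhds L) := by
  rw [Metric.tendsto_atTop]
  intro ε hε
  obtain ⟨δ1, hδ1, δ2, hδ2, hd0⟩ := hdiff (ε / 2) (by positivity)
  have hd : ∀ x : ℝ × ℝ, 0 < |x.1 - c.1| → |x.1 - c.1| < δ1 → 0 < |x.2 - c.2| →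
      |x.2 - c.2| < δ2 → |dSlope f c x - L| < ε / 2 := fun x => hd0 x (Set.mem_univ x)
  set δ := min δ1 δ2 with hδdef
  have hδ : 0 < δ := lt_min hδ1 hδ2
  obtain ⟨N1, hN1⟩ := Metric.tendsto_atTop.mp hAlim δ hδ
  obtain ⟨N2, hN2⟩ := Metric.tendsto_atTop.mp hBlim δ hδ
  have habs : ∀ (x : ℝ × ℝ), dist x c < δ →
      |x.1 - c.1| < δ1 ∧ |x.2 - c.2| < δ2 := by
    intro x hx
    constructor
    · calc |x.1 - c.1| = dist x.1 c.1 := (Real.dist_eq _ _).symm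
        _ ≤ dist x c := by rw [Prod.dist_eq]; exact le_max_left _ _
        _ < δ := hx
        _ ≤ δ1 := min_le_left _ _
    · calc |x.2 - c.2| = dist x.2 c.2 := (Real.dist_eq _ _).symm
        _ ≤ dist x c := by rw [Prod.dist_eq]; exact le_max_right _ _
        _ < δ := hx
        _ ≤ δ2 := min_le_right _ _
  have half : ε / 2 < ε := by linarith
  rcases hcase with h | ⟨hAlt, N, hBc⟩ | ⟨hBgt, N, hAc⟩
  · refine ⟨max N1 N2, fun n hn => ?_⟩
    obtain ⟨hA1, hA2⟩ := habs (A n) (hN1 n (le_trans (le_max_left _ _) hn))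
    obtain ⟨hB1, hB2⟩ := habs (B n) (hN2 n (le_trans (le_max_right _ _) hn))
    obtain ⟨⟨ha1, ha2⟩, hb1, hb2⟩ := h n
    rw [Real.dist_eq]
    have := slope_bound f c L (ε / 2) δ1 δ2 (by positivity) hd (A n) (B n)
      ha1.le ha2.le hb1.le hb2.le (ha1.trans hb1) (ha2.trans hb2) hA1 hA2 hB1 hB2
    linarith
  · refine ⟨max N1 N, fun n hn => ?_⟩
    obtain ⟨hA1, hA2⟩ := habs (A n) (hN1 n (le_trans (le_max_left _ _) hn))
    obtain ⟨ha1, ha2⟩ := hAlt n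
    have hBn : B n = c := hBc n (le_trans (le_max_right _ _) hn)
    rw [Real.dist_eq, hBn]
    have := slope_bound f c L (ε / 2) δ1 δ2 (by positivity) hd (A n) c
      ha1.le ha2.le le_rfl le_rfl ha1 ha2 hA1 hA2 (by simpa using hδ1) (by simpa using hδ2)
    linarith
  · refine ⟨max N2 N, fun n hn => ?_⟩
    obtain ⟨hB1, hB2⟩ := habs (B n) (hN2 n (le_trans (le_max_left _ _) hn))
    obtain ⟨hb1, hb2⟩ := hBgt n
    have hAn : A n = c := hAc n (le_trans (le_max_right _ _) hn)
    rw [Real.dist_eq, hAn]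
    have := slope_bound f c L (ε / 2) δ1 δ2 (by positivity) hd c (B n)
      le_rfl le_rfl hb1.le hb2.le hb1 hb2 (by simpa using hδ1) (by simpa using hδ2) hB1 hB2
    linarith
end
end

section
/- (Double Rolle's theorem) Let a, b ∈ ℝ² with a < b, and let f : [a,b] → ℝ be double continuous on [a,b] and double differentiable on (a,b). If Δ_a^b(f) = 0, then there exists c ∈ (a,b) with f'(c) = 0. -/
open Set Filter Topology MeasureTheory

noncomputable section

section Stmt9Aux

private lemma chain_right (P : ℝ → Prop) (l r : ℝ)
    (h : ∀ t ∈ Set.Icc l r, ∃ δ > 0, ∀ t' ∈ Set.Icc l r, |t' - t| < δ → (P t ↔ P t'))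
    (t₀ t₁ : ℝ) (ht₀ : t₀ ∈ Set.Icc l r) (ht₁ : t₁ ∈ Set.Icc l r)
    (hle : t₀ ≤ t₁) (hP : P t₀) : P t₁ := by
  set T : Set ℝ := {t | t ∈ Set.Icc t₀ t₁ ∧ P t} with hT
  have hmem : t₀ ∈ T := ⟨⟨le_refl _, hle⟩, hP⟩
  have hbdd : BddAbove T := ⟨t₁, fun t ht => ht.1.2⟩
  have hne : T.Nonempty := ⟨t₀, hmem⟩
  set u := sSup T with hu_def
  have hu0 : t₀ ≤ u := le_csSup hbdd hmem
  have hu1 : u ≤ t₁ := csSup_le hne fun t ht => ht.1.2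
  have huIcc : u ∈ Set.Icc l r := ⟨ht₀.1.trans hu0, hu1.trans ht₁.2⟩
  obtain ⟨δ, hδ, hprop⟩ := h u huIcc
  obtain ⟨t', ht'T, ht'gt⟩ := exists_lt_of_lt_csSup hne (show u - δ < u by linarith)
  have ht'le : t' ≤ u := le_csSup hbdd ht'T
  have ht'Icc : t' ∈ Set.Icc l r := ⟨ht₀.1.trans ht'T.1.1, ht'T.1.2.trans ht₁.2⟩
  have hPu : P u := (hprop t' ht'Icc (by rw [abs_sub_lt_iff]; constructor <;> linarith)).mpr ht'T.2
  rcases eq_or_lt_of_le hu1 with heq | hlt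
  · rwa [heq] at hPu
  · exfalso
    have h1 : u < min t₁ (u + δ / 2) := lt_min hlt (by linarith)
    have h2 : min t₁ (u + δ / 2) ≤ t₁ := min_le_left _ _
    have h3 : min t₁ (u + δ / 2) ≤ u + δ / 2 := min_le_right _ _
    have hIcc : min t₁ (u + δ / 2) ∈ Set.Icc l r := ⟨huIcc.1.trans h1.le, h2.trans ht₁.2⟩
    have hPt'' : P (min t₁ (u + δ / 2)) :=
      (hprop _ hIcc (by rw [abs_sub_lt_iff]; constructor <;> linarith)).mp hPu
    have : min t₁ (u + δ / 2) ≤ u := le_csSup hbdd ⟨⟨hu0.trans h1.le, h2⟩, hPt''⟩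
    linarith

private lemma chain_icc (P : ℝ → Prop) (l r : ℝ)
    (h : ∀ t ∈ Set.Icc l r, ∃ δ > 0, ∀ t' ∈ Set.Icc l r, |t' - t| < δ → (P t ↔ P t'))
    (t₀ t₁ : ℝ) (ht₀ : t₀ ∈ Set.Icc l r) (ht₁ : t₁ ∈ Set.Icc l r) (hP : P t₀) : P t₁ := by
  rcases le_total t₀ t₁ with hle | hle
  · exact chain_right P l r h t₀ t₁ ht₀ ht₁ hle hP
  · have hmap : ∀ t ∈ Set.Icc l r, l + r - t ∈ Set.Icc l r := by
      intro t ht; exact ⟨by linarith [ht.2], by linarith [ht.1]⟩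
    have key := chain_right (fun t => P (l + r - t)) l r ?_ (l + r - t₀) (l + r - t₁)
      (hmap _ ht₀) (hmap _ ht₁) (by linarith) ?_
    · have key' : P (l + r - (l + r - t₁)) := key
      have e : l + r - (l + r - t₁) = t₁ := by ring
      rwa [e] at key'
    · intro t ht
      obtain ⟨δ, hδ, hp⟩ := h (l + r - t) (hmap _ ht)
      refine ⟨δ, hδ, fun t' ht' hd => ?_⟩
      exact hp (l + r - t') (hmap _ ht')
        (by rw [show l + r - t' - (l + r - t) = -(t' - t) by ring, abs_neg]; exact hd)
    · show P (l + r - (l + r - t₀))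
      have e : l + r - (l + r - t₀) = t₀ := by ring
      rw [e]; exact hP

private lemma exists_chord {g : ℝ → ℝ} {l r : ℝ} (hlr : l < r)
    (hg : ContinuousOn g (Set.Icc l r)) (hval : g l = g r) :
    ∃ u, l ≤ u ∧ u + (r - l) / 2 ≤ r ∧ g (u + (r - l) / 2) = g u := by
  have hk0 : 0 < (r - l) / 2 := by linarith
  have hml : l ≤ l + (r - l) / 2 := by linarith
  have hψ : ContinuousOn (fun u => g (u + (r - l) / 2) - g u) (Set.Icc l (l + (r - l) / 2)) := by
    apply ContinuousOn.sub
    · apply hg.comp (continuousOn_id.add continuousOn_const)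
      intro x hx
      show x + (r - l) / 2 ∈ Set.Icc l r
      exact ⟨by linarith [hx.1], by linarith [hx.2]⟩
    · exact hg.mono (fun x hx => ⟨hx.1, by linarith [hx.2]⟩)
  have hsum : (g (l + (r - l) / 2) - g l)
      + (g ((l + (r - l) / 2) + (r - l) / 2) - g (l + (r - l) / 2)) = 0 := by
    have e : (l + (r - l) / 2) + (r - l) / 2 = r := by ring
    rw [e, hval]; ring
  have hz : (0 : ℝ) ∈ (fun u => g (u + (r - l) / 2) - g u) '' Set.Icc l (l + (r - l) / 2) := by
    rcases le_total (g (l + (r - l) / 2) - g l) 0 with h | h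
    · apply intermediate_value_Icc hml hψ
      refine ⟨h, ?_⟩
      show (0:ℝ) ≤ g ((l + (r - l) / 2) + (r - l) / 2) - g (l + (r - l) / 2)
      linarith
    · apply intermediate_value_Icc' hml hψ
      refine ⟨?_, h⟩
      show g ((l + (r - l) / 2) + (r - l) / 2) - g (l + (r - l) / 2) ≤ (0:ℝ)
      linarith
  obtain ⟨u, huIcc, hu⟩ := hz
  exact ⟨u, huIcc.1, by linarith [huIcc.2], by linarith [hu]⟩

private lemma exists_pair_pos {g : ℝ → ℝ} {l r x₀ : ℝ}
    (hg : ContinuousOn g (Set.Icc l r)) (h0 : g l = 0) (h1 : g r = 0)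
    (hx₀ : x₀ ∈ Set.Ioo l r) (hpos : 0 < g x₀) :
    ∃ u v, l < u ∧ u < v ∧ v < r ∧ g u = g v := by
  have hgl : ContinuousOn g (Set.Icc l x₀) := hg.mono (Set.Icc_subset_Icc le_rfl hx₀.2.le)
  have hgr : ContinuousOn g (Set.Icc x₀ r) := hg.mono (Set.Icc_subset_Icc hx₀.1.le le_rfl)
  have hmem1 : g x₀ / 2 ∈ Set.Icc (g l) (g x₀) := by rw [h0]; constructor <;> linarith
  obtain ⟨u, huI, hu⟩ := intermediate_value_Icc hx₀.1.le hgl hmem1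
  have hmem2 : g x₀ / 2 ∈ Set.Icc (g r) (g x₀) := by rw [h1]; constructor <;> linarith
  obtain ⟨v, hvI, hv⟩ := intermediate_value_Icc' hx₀.2.le hgr hmem2
  have hul : l < u := lt_of_le_of_ne huI.1 (fun h => by rw [← h, h0] at hu; linarith)
  have hux : u < x₀ := lt_of_le_of_ne huI.2 (fun h => by rw [h] at hu; linarith)
  have hxv : x₀ < v := lt_of_le_of_ne hvI.1 (fun h => by rw [← h] at hv; linarith)
  have hvr : v < r := lt_of_le_of_ne hvI.2 (fun h => by rw [h, h1] at hv; linarith)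
  exact ⟨u, v, hul, hux.trans hxv, hvr, by rw [hu, hv]⟩

private lemma exists_pair {g : ℝ → ℝ} {l r : ℝ} (hlr : l < r)
    (hg : ContinuousOn g (Set.Icc l r)) (h0 : g l = 0) (h1 : g r = 0) :
    ∃ u v, l < u ∧ u < v ∧ v < r ∧ g u = g v := by
  by_cases hz : ∀ x ∈ Set.Ioo l r, g x = 0
  · refine ⟨l + (r - l) / 3, l + 2 * (r - l) / 3, by linarith, by linarith, by linarith, ?_⟩
    rw [hz _ ⟨by linarith, by linarith⟩, hz _ ⟨by linarith, by linarith⟩]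
  · push_neg at hz
    obtain ⟨x₀, hx₀, hgx₀⟩ := hz
    rcases lt_or_gt_of_ne hgx₀ with hneg | hpos
    · obtain ⟨u, v, h1', h2', h3', h4'⟩ := exists_pair_pos (g := fun x => -g x)
        (hg.neg) (by simp [h0]) (by simp [h1]) hx₀ (by simpa using neg_pos.mpr hneg)
      exact ⟨u, v, h1', h2', h3', by simpa using h4'⟩
    · exact exists_pair_pos hg h0 h1 hx₀ hpos

variable {f : ℝ × ℝ → ℝ} {a b : ℝ × ℝ}

private lemma keyQ (hcont : DoubleContinuousOn f (Set.Icc a.1 b.1) (Set.Icc a.2 b.2))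
    {p₁ s : ℝ} (hp₁ : p₁ ∈ Set.Icc a.1 b.1) (hs : s ∈ Set.Icc a.2 b.2)
    {q₁ : ℝ} (hq₁ : q₁ ∈ Set.Icc a.1 b.1) :
    Tendsto (fun u => dDiff f (p₁, s) (q₁, u))
      (nhdsWithin s (Set.Icc a.2 b.2 \ {s})) (nhds 0) := by
  refine chain_icc
    (fun t => Tendsto (fun u => dDiff f (p₁, s) (t, u))
      (nhdsWithin s (Set.Icc a.2 b.2 \ {s})) (nhds 0)) a.1 b.1 ?_ p₁ q₁ hp₁ hq₁ ?_
  · intro t ht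
    obtain ⟨δ₁, hδ₁, δ₂, hδ₂, h1, h2⟩ := hcont t ht s hs
    refine ⟨δ₁, hδ₁, fun t' ht' hd => ?_⟩
    have hd' := abs_lt.mp hd
    have htt' : Tendsto (fun u => dDiff f (t, s) (t', u))
        (nhdsWithin s (Set.Icc a.2 b.2 \ {s})) (nhds 0) :=
      h1 t' ⟨⟨by linarith [hd'.1], by linarith [hd'.2]⟩, ht'⟩
    have heq : (fun u => dDiff f (p₁, s) (t', u))
        = fun u => dDiff f (p₁, s) (t, u) + dDiff f (t, s) (t', u) := by
      funext u; simp only [dDiff]; ring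
    have heq2 : (fun u => dDiff f (p₁, s) (t, u))
        = fun u => dDiff f (p₁, s) (t', u) - dDiff f (t, s) (t', u) := by
      funext u; simp only [dDiff]; ring
    constructor
    · intro hQ
      show Tendsto (fun u => dDiff f (p₁, s) (t', u))
        (nhdsWithin s (Set.Icc a.2 b.2 \ {s})) (nhds 0)
      rw [heq]
      simpa using (show Tendsto (fun u => dDiff f (p₁, s) (t, u))
        (nhdsWithin s (Set.Icc a.2 b.2 \ {s})) (nhds 0) from hQ).add htt'
    · intro hQ'
      show Tendsto (fun u => dDiff f (p₁, s) (t, u))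
        (nhdsWithin s (Set.Icc a.2 b.2 \ {s})) (nhds 0)
      rw [heq2]
      simpa using (show Tendsto (fun u => dDiff f (p₁, s) (t', u))
        (nhdsWithin s (Set.Icc a.2 b.2 \ {s})) (nhds 0) from hQ').sub htt'
  · show Tendsto (fun u => dDiff f (p₁, s) (p₁, u))
      (nhdsWithin s (Set.Icc a.2 b.2 \ {s})) (nhds 0)
    have heq : (fun u => dDiff f (p₁, s) (p₁, u)) = fun _ : ℝ => (0:ℝ) := by
      funext u; simp only [dDiff]; ring
    rw [heq]; exact tendsto_const_nhds

private lemma keyR (hcont : DoubleContinuousOn f (Set.Icc a.1 b.1) (Set.Icc a.2 b.2))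
    {s₁ p₂ : ℝ} (hs₁ : s₁ ∈ Set.Icc a.1 b.1) (hp₂ : p₂ ∈ Set.Icc a.2 b.2)
    {q₂ : ℝ} (hq₂ : q₂ ∈ Set.Icc a.2 b.2) :
    Tendsto (fun t => dDiff f (s₁, p₂) (t, q₂))
      (nhdsWithin s₁ (Set.Icc a.1 b.1 \ {s₁})) (nhds 0) := by
  refine chain_icc
    (fun w => Tendsto (fun t => dDiff f (s₁, p₂) (t, w))
      (nhdsWithin s₁ (Set.Icc a.1 b.1 \ {s₁})) (nhds 0)) a.2 b.2 ?_ p₂ q₂ hp₂ hq₂ ?_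
  · intro u hu
    obtain ⟨δ₁, hδ₁, δ₂, hδ₂, h1, h2⟩ := hcont s₁ hs₁ u hu
    refine ⟨δ₂, hδ₂, fun u' hu' hd => ?_⟩
    have hd' := abs_lt.mp hd
    have htt' : Tendsto (fun t => dDiff f (s₁, u) (t, u'))
        (nhdsWithin s₁ (Set.Icc a.1 b.1 \ {s₁})) (nhds 0) :=
      h2 u' ⟨⟨by linarith [hd'.1], by linarith [hd'.2]⟩, hu'⟩
    have heq : (fun t => dDiff f (s₁, p₂) (t, u'))
        = fun t => dDiff f (s₁, p₂) (t, u) + dDiff f (s₁, u) (t, u') := by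
      funext t; simp only [dDiff]; ring
    have heq2 : (fun t => dDiff f (s₁, p₂) (t, u))
        = fun t => dDiff f (s₁, p₂) (t, u') - dDiff f (s₁, u) (t, u') := by
      funext t; simp only [dDiff]; ring
    constructor
    · intro hQ
      show Tendsto (fun t => dDiff f (s₁, p₂) (t, u'))
        (nhdsWithin s₁ (Set.Icc a.1 b.1 \ {s₁})) (nhds 0)
      rw [heq]
      simpa using (show Tendsto (fun t => dDiff f (s₁, p₂) (t, u))
        (nhdsWithin s₁ (Set.Icc a.1 b.1 \ {s₁})) (nhds 0) from hQ).add htt'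
    · intro hQ'
      show Tendsto (fun t => dDiff f (s₁, p₂) (t, u))
        (nhdsWithin s₁ (Set.Icc a.1 b.1 \ {s₁})) (nhds 0)
      rw [heq2]
      simpa using (show Tendsto (fun t => dDiff f (s₁, p₂) (t, u'))
        (nhdsWithin s₁ (Set.Icc a.1 b.1 \ {s₁})) (nhds 0) from hQ').sub htt'
  · show Tendsto (fun t => dDiff f (s₁, p₂) (t, p₂))
      (nhdsWithin s₁ (Set.Icc a.1 b.1 \ {s₁})) (nhds 0)
    have heq : (fun t => dDiff f (s₁, p₂) (t, p₂)) = fun _ : ℝ => (0:ℝ) := by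
      funext t; simp only [dDiff]; ring
    rw [heq]; exact tendsto_const_nhds

private lemma contOn2 (hcont : DoubleContinuousOn f (Set.Icc a.1 b.1) (Set.Icc a.2 b.2))
    {p : ℝ × ℝ} (hp : p.1 ∈ Set.Icc a.1 b.1) {q₁ : ℝ} (hq₁ : q₁ ∈ Set.Icc a.1 b.1) :
    ContinuousOn (fun u => dDiff f p (q₁, u)) (Set.Icc a.2 b.2) := by
  intro s hs
  have hQ := keyQ hcont hp hs hq₁
  have hzero : dDiff f (p.1, s) (q₁, s) = 0 := by simp only [dDiff]; ring
  have h2 : Tendsto (fun u => dDiff f (p.1, s) (q₁, u))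
      (nhdsWithin s (Set.Icc a.2 b.2)) (nhds 0) := by
    have hsub : Set.Icc a.2 b.2 ⊆ insert s (Set.Icc a.2 b.2 \ {s}) := by
      intro x hx
      by_cases hxs : x = s
      · exact Set.mem_insert_iff.mpr (Or.inl hxs)
      · exact Set.mem_insert_iff.mpr (Or.inr ⟨hx, hxs⟩)
    refine Tendsto.mono_left ?_ (nhdsWithin_mono s hsub)
    rw [nhdsWithin_insert, Filter.tendsto_sup]
    constructor
    · have := tendsto_pure_nhds (fun u => dDiff f (p.1, s) (q₁, u)) s
      rwa [hzero] at this
    · exact hQ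
  have heq : (fun u => dDiff f p (q₁, u))
      = fun u => dDiff f p (q₁, s) + dDiff f (p.1, s) (q₁, u) := by
    funext u; simp only [dDiff]; ring
  show Tendsto (fun u => dDiff f p (q₁, u)) (nhdsWithin s (Set.Icc a.2 b.2))
    (nhds (dDiff f p (q₁, s)))
  rw [heq]
  simpa using tendsto_const_nhds.add h2

private lemma contOn1 (hcont : DoubleContinuousOn f (Set.Icc a.1 b.1) (Set.Icc a.2 b.2))
    {p : ℝ × ℝ} (hp : p.2 ∈ Set.Icc a.2 b.2) {q₂ : ℝ} (hq₂ : q₂ ∈ Set.Icc a.2 b.2) :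
    ContinuousOn (fun t => dDiff f p (t, q₂)) (Set.Icc a.1 b.1) := by
  intro s hs
  have hR := keyR hcont hs hp hq₂
  have hzero : dDiff f (s, p.2) (s, q₂) = 0 := by simp only [dDiff]; ring
  have h2 : Tendsto (fun t => dDiff f (s, p.2) (t, q₂))
      (nhdsWithin s (Set.Icc a.1 b.1)) (nhds 0) := by
    have hsub : Set.Icc a.1 b.1 ⊆ insert s (Set.Icc a.1 b.1 \ {s}) := by
      intro x hx
      by_cases hxs : x = s
      · exact Set.mem_insert_iff.mpr (Or.inl hxs)
      · exact Set.mem_insert_iff.mpr (Or.inr ⟨hx, hxs⟩)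
    refine Tendsto.mono_left ?_ (nhdsWithin_mono s hsub)
    rw [nhdsWithin_insert, Filter.tendsto_sup]
    constructor
    · have := tendsto_pure_nhds (fun t => dDiff f (s, p.2) (t, q₂)) s
      rwa [hzero] at this
    · exact hR
  have heq : (fun t => dDiff f p (t, q₂))
      = fun t => dDiff f p (s, q₂) + dDiff f (s, p.2) (t, q₂) := by
    funext t; simp only [dDiff]; ring
  show Tendsto (fun t => dDiff f p (t, q₂)) (nhdsWithin s (Set.Icc a.1 b.1))
    (nhds (dDiff f p (s, q₂)))
  rw [heq]
  simpa using tendsto_const_nhds.add h2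

end Stmt9Aux

/-- double Rolle: if `f` is double continuous on `[a,b]`, double
differentiable on `(a,b)` and `Δ_a^b(f) = 0`, then `f'(c) = 0` for some `c ∈ (a,b)`. -/
theorem stmt9 (f : ℝ × ℝ → ℝ) (a b : ℝ × ℝ)
    (hab1 : a.1 < b.1) (hab2 : a.2 < b.2)
    (hcont : DoubleContinuousOn f (Set.Icc a.1 b.1) (Set.Icc a.2 b.2))
    (hdiff : ∀ x ∈ Set.Ioo a.1 b.1 ×ˢ Set.Ioo a.2 b.2, ∃ L, HasDoubleDerivAt f x L)
    (h0 : dDiff f a b = 0) :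
    ∃ c ∈ Set.Ioo a.1 b.1 ×ˢ Set.Ioo a.2 b.2, HasDoubleDerivAt f c 0 := by
  classical
  have ha1 : a.1 ∈ Set.Icc a.1 b.1 := ⟨le_rfl, hab1.le⟩
  have hb1 : b.1 ∈ Set.Icc a.1 b.1 := ⟨hab1.le, le_rfl⟩
  have ha2 : a.2 ∈ Set.Icc a.2 b.2 := ⟨le_rfl, hab2.le⟩
  have hb2 : b.2 ∈ Set.Icc a.2 b.2 := ⟨hab2.le, le_rfl⟩
  -- halving lemma
  have halve : ∀ p q : ℝ × ℝ, p.1 ∈ Set.Icc a.1 b.1 → q.1 ∈ Set.Icc a.1 b.1 →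
      p.2 ∈ Set.Icc a.2 b.2 → q.2 ∈ Set.Icc a.2 b.2 → p.1 < q.1 → p.2 < q.2 →
      dDiff f p q = 0 →
      ∃ p' q' : ℝ × ℝ, p.1 ≤ p'.1 ∧ p.2 ≤ p'.2 ∧ q'.1 ≤ q.1 ∧ q'.2 ≤ q.2 ∧
        q'.1 - p'.1 = (q.1 - p.1) / 2 ∧ q'.2 - p'.2 = (q.2 - p.2) / 2 ∧
        dDiff f p' q' = 0 := by
    intro p q hp1 hq1 hp2 hq2 h12 h22 hD
    have hsub2 : Set.Icc p.2 q.2 ⊆ Set.Icc a.2 b.2 := Set.Icc_subset_Icc hp2.1 hq2.2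
    have hg : ContinuousOn (fun w => dDiff f p (q.1, w)) (Set.Icc p.2 q.2) :=
      (contOn2 hcont hp1 hq1).mono hsub2
    have hv1 : dDiff f p (q.1, p.2) = 0 := by simp only [dDiff]; ring
    have hv2 : dDiff f p (q.1, q.2) = dDiff f p q := by simp only [dDiff]
    obtain ⟨u, hu1, hu2, hueq⟩ := exists_chord h22 hg (by rw [hv1, hv2, hD])
    have hueq' : dDiff f p (q.1, u + (q.2 - p.2) / 2) = dDiff f p (q.1, u) := hueq
    have huA : u ∈ Set.Icc a.2 b.2 := hsub2 ⟨hu1, by linarith⟩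
    have hvA : u + (q.2 - p.2) / 2 ∈ Set.Icc a.2 b.2 := hsub2 ⟨by linarith, hu2⟩
    have hstrip : dDiff f (p.1, u) (q.1, u + (q.2 - p.2) / 2) = 0 := by
      have e : dDiff f (p.1, u) (q.1, u + (q.2 - p.2) / 2)
          = dDiff f p (q.1, u + (q.2 - p.2) / 2) - dDiff f p (q.1, u) := by
        simp only [dDiff]; ring
      rw [e, hueq', sub_self]
    have hsub1 : Set.Icc p.1 q.1 ⊆ Set.Icc a.1 b.1 := Set.Icc_subset_Icc hp1.1 hq1.2
    have hg2 : ContinuousOn (fun t => dDiff f (p.1, u) (t, u + (q.2 - p.2) / 2))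
        (Set.Icc p.1 q.1) :=
      (contOn1 hcont (p := (p.1, u)) huA hvA).mono hsub1
    have hw1 : dDiff f (p.1, u) (p.1, u + (q.2 - p.2) / 2) = 0 := by
      simp only [dDiff]; ring
    obtain ⟨t, ht1, ht2, hteq⟩ := exists_chord h12 hg2 (by rw [hw1, hstrip])
    have hteq' : dDiff f (p.1, u) (t + (q.1 - p.1) / 2, u + (q.2 - p.2) / 2)
        = dDiff f (p.1, u) (t, u + (q.2 - p.2) / 2) := hteq
    refine ⟨(t, u), (t + (q.1 - p.1) / 2, u + (q.2 - p.2) / 2),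
      ht1, hu1, ht2, hu2, by ring, by ring, ?_⟩
    have e : dDiff f (t, u) (t + (q.1 - p.1) / 2, u + (q.2 - p.2) / 2)
        = dDiff f (p.1, u) (t + (q.1 - p.1) / 2, u + (q.2 - p.2) / 2)
          - dDiff f (p.1, u) (t, u + (q.2 - p.2) / 2) := by
      simp only [dDiff]; ring
    rw [e, hteq', sub_self]
  -- Step B: find a rectangle strictly inside (a, b) with zero double difference
  have hg0 : ContinuousOn (fun w => dDiff f a (b.1, w)) (Set.Icc a.2 b.2) :=
    contOn2 hcont ha1 hb1
  have hz1 : dDiff f a (b.1, a.2) = 0 := by simp only [dDiff]; ring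
  have hz2 : dDiff f a (b.1, b.2) = 0 := by
    have e : dDiff f a (b.1, b.2) = dDiff f a b := by simp only [dDiff]
    rw [e, h0]
  obtain ⟨u, v, hau, huv, hvb, hguv0⟩ := exists_pair hab2 hg0 hz1 hz2
  have hguv : dDiff f a (b.1, u) = dDiff f a (b.1, v) := hguv0
  have huA : u ∈ Set.Icc a.2 b.2 := ⟨hau.le, (huv.trans hvb).le⟩
  have hvA : v ∈ Set.Icc a.2 b.2 := ⟨(hau.trans huv).le, hvb.le⟩
  have hstrip : dDiff f (a.1, u) (b.1, v) = 0 := by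
    have e : dDiff f (a.1, u) (b.1, v) = dDiff f a (b.1, v) - dDiff f a (b.1, u) := by
      simp only [dDiff]; ring
    rw [e, ← hguv, sub_self]
  have hg1 : ContinuousOn (fun t => dDiff f (a.1, u) (t, v)) (Set.Icc a.1 b.1) :=
    contOn1 hcont (p := (a.1, u)) huA hvA
  have hz3 : dDiff f (a.1, u) (a.1, v) = 0 := by simp only [dDiff]; ring
  obtain ⟨t₁, t₂, hat, htt, htb, hteq0⟩ := exists_pair hab1 hg1 hz3 hstrip
  have hteq : dDiff f (a.1, u) (t₁, v) = dDiff f (a.1, u) (t₂, v) := hteq0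
  have hD0 : dDiff f (t₁, u) (t₂, v) = 0 := by
    have e : dDiff f (t₁, u) (t₂, v)
        = dDiff f (a.1, u) (t₂, v) - dDiff f (a.1, u) (t₁, v) := by
      simp only [dDiff]; ring
    rw [e, ← hteq, sub_self]
  -- bounds: a.1 < t₁ < t₂ < b.1, a.2 < u < v < b.2
  -- the nested sequence of halved rectangles
  let Good : (ℝ × ℝ) × (ℝ × ℝ) → Prop := fun P =>
    t₁ ≤ P.1.1 ∧ u ≤ P.1.2 ∧ P.2.1 ≤ t₂ ∧ P.2.2 ≤ v ∧
    P.1.1 < P.2.1 ∧ P.1.2 < P.2.2 ∧ dDiff f P.1 P.2 = 0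
  have step : ∀ P, Good P → ∃ Q : (ℝ × ℝ) × (ℝ × ℝ), Good Q ∧
      P.1.1 ≤ Q.1.1 ∧ P.1.2 ≤ Q.1.2 ∧ Q.2.1 ≤ P.2.1 ∧ Q.2.2 ≤ P.2.2 ∧
      Q.2.1 - Q.1.1 = (P.2.1 - P.1.1) / 2 ∧ Q.2.2 - Q.1.2 = (P.2.2 - P.1.2) / 2 := by
    rintro P ⟨hg1', hg2', hg3', hg4', hg5', hg6', hg7'⟩
    obtain ⟨p', q', k1, k2, k3, k4, k5, k6, k7⟩ := halve P.1 P.2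
      ⟨by linarith [hat.le], by linarith [htb.le]⟩
      ⟨by linarith [hat.le], by linarith [htb.le]⟩
      ⟨by linarith [hau.le], by linarith [hvb.le]⟩
      ⟨by linarith [hau.le], by linarith [hvb.le]⟩
      hg5' hg6' hg7'
    exact ⟨(p', q'), ⟨hg1'.trans k1, hg2'.trans k2, k3.trans hg3', k4.trans hg4',
      by simp only; linarith, by simp only; linarith, k7⟩, k1, k2, k3, k4, k5, k6⟩
  choose! F hF using step
  let seq : ℕ → (ℝ × ℝ) × (ℝ × ℝ) := fun n => Nat.rec ((t₁, u), (t₂, v)) (fun _ p => F p) n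
  have hGood : ∀ n, Good (seq n) := by
    intro n; induction n with
    | zero => exact ⟨le_rfl, le_rfl, le_rfl, le_rfl, htt, huv, hD0⟩
    | succ n ih => exact (hF _ ih).1
  have hstep' : ∀ n, (seq n).1.1 ≤ (seq (n + 1)).1.1 ∧ (seq n).1.2 ≤ (seq (n + 1)).1.2 ∧
      (seq (n + 1)).2.1 ≤ (seq n).2.1 ∧ (seq (n + 1)).2.2 ≤ (seq n).2.2 := by
    intro n
    obtain ⟨_, h1, h2, h3, h4, _, _⟩ := hF _ (hGood n)
    exact ⟨h1, h2, h3, h4⟩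
  have hdim1 : ∀ n, (seq n).2.1 - (seq n).1.1 = (t₂ - t₁) / 2 ^ n := by
    intro n; induction n with
    | zero => show t₂ - t₁ = (t₂ - t₁) / 2 ^ 0; norm_num
    | succ n ih =>
      have hs := (hF _ (hGood n)).2.2.2.2.2.1
      show (F (seq n)).2.1 - (F (seq n)).1.1 = (t₂ - t₁) / 2 ^ (n + 1)
      rw [hs, ih, pow_succ]; ring
  have hdim2 : ∀ n, (seq n).2.2 - (seq n).1.2 = (v - u) / 2 ^ n := by
    intro n; induction n with
    | zero => show v - u = (v - u) / 2 ^ 0; norm_num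
    | succ n ih =>
      have hs := (hF _ (hGood n)).2.2.2.2.2.2
      show (F (seq n)).2.2 - (F (seq n)).1.2 = (v - u) / 2 ^ (n + 1)
      rw [hs, ih, pow_succ]; ring
  have hmono1 : Monotone (fun n => (seq n).1.1) := monotone_nat_of_le_succ fun n => (hstep' n).1
  have hmono2 : Monotone (fun n => (seq n).1.2) := monotone_nat_of_le_succ fun n => (hstep' n).2.1
  have hanti1 : Antitone (fun n => (seq n).2.1) := antitone_nat_of_succ_le fun n => (hstep' n).2.2.1
  have hanti2 : Antitone (fun n => (seq n).2.2) := antitone_nat_of_succ_le fun n => (hstep' n).2.2.2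
  have hcled1 : ∀ n m, (seq n).1.1 ≤ (seq m).2.1 := by
    intro n m
    rcases le_total n m with h | h
    · exact (hmono1 h).trans (hGood m).2.2.2.2.1.le
    · exact ((hGood n).2.2.2.2.1.le).trans (hanti1 h)
  have hcled2 : ∀ n m, (seq n).1.2 ≤ (seq m).2.2 := by
    intro n m
    rcases le_total n m with h | h
    · exact (hmono2 h).trans (hGood m).2.2.2.2.2.1.le
    · exact ((hGood n).2.2.2.2.2.1.le).trans (hanti2 h)
  have hbdd1 : BddAbove (Set.range fun n => (seq n).1.1) := by
    refine ⟨t₂, ?_⟩; rintro _ ⟨n, rfl⟩; exact hcled1 n 0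
  have hbdd2 : BddAbove (Set.range fun n => (seq n).1.2) := by
    refine ⟨v, ?_⟩; rintro _ ⟨n, rfl⟩; exact hcled2 n 0
  set x₁ := ⨆ n, (seq n).1.1 with hx₁def
  set x₂ := ⨆ n, (seq n).1.2 with hx₂def
  have hle1 : ∀ n, (seq n).1.1 ≤ x₁ := fun n => le_ciSup hbdd1 n
  have hge1 : ∀ m, x₁ ≤ (seq m).2.1 := fun m => ciSup_le fun n => hcled1 n m
  have hle2 : ∀ n, (seq n).1.2 ≤ x₂ := fun n => le_ciSup hbdd2 n
  have hge2 : ∀ m, x₂ ≤ (seq m).2.2 := fun m => ciSup_le fun n => hcled2 n m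
  have hx₁I : x₁ ∈ Set.Ioo a.1 b.1 := by
    constructor
    · have h1 : t₁ ≤ x₁ := hle1 0
      linarith
    · have h2 : x₁ ≤ t₂ := hge1 0
      linarith
  have hx₂I : x₂ ∈ Set.Ioo a.2 b.2 := by
    constructor
    · have h1 : u ≤ x₂ := hle2 0
      linarith
    · have h2 : x₂ ≤ v := hge2 0
      linarith
  have hmem : (x₁, x₂) ∈ Set.Ioo a.1 b.1 ×ˢ Set.Ioo a.2 b.2 := Set.mem_prod.mpr ⟨hx₁I, hx₂I⟩
  obtain ⟨L, hL⟩ := hdiff (x₁, x₂) hmem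
  have hLabs : ∀ ε : ℝ, 0 < ε → |L| ≤ ε := by
    intro ε hε
    obtain ⟨δ₁, hδ₁, δ₂, hδ₂, hslope⟩ := hL ε hε
    have htpos : (0:ℝ) < t₂ - t₁ := by linarith
    have hvpos : (0:ℝ) < v - u := by linarith
    obtain ⟨n, hn⟩ := exists_pow_lt_of_lt_one
      (lt_min (div_pos hδ₁ htpos) (div_pos hδ₂ hvpos)) (show (1/2 : ℝ) < 1 by norm_num)
    have hn1 : (1/2 : ℝ) ^ n < δ₁ / (t₂ - t₁) := hn.trans_le (min_le_left _ _)
    have hn2 : (1/2 : ℝ) ^ n < δ₂ / (v - u) := hn.trans_le (min_le_right _ _)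
    have hpow : ((1:ℝ)/2) ^ n = ((2:ℝ) ^ n)⁻¹ := by rw [one_div, inv_pow]
    have hw : (seq n).2.1 - (seq n).1.1 < δ₁ := by
      rw [hdim1 n]
      rw [lt_div_iff₀ htpos] at hn1
      calc (t₂ - t₁) / 2 ^ n = (1/2 : ℝ) ^ n * (t₂ - t₁) := by rw [hpow]; ring
        _ < δ₁ := hn1
    have hh : (seq n).2.2 - (seq n).1.2 < δ₂ := by
      rw [hdim2 n]
      rw [lt_div_iff₀ hvpos] at hn2
      calc (v - u) / 2 ^ n = (1/2 : ℝ) ^ n * (v - u) := by rw [hpow]; ring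
        _ < δ₂ := hn2
    set c₁ := (seq n).1.1 with hc₁def
    set c₂ := (seq n).1.2 with hc₂def
    set d₁ := (seq n).2.1 with hd₁def
    set d₂ := (seq n).2.2 with hd₂def
    have hcx1 : c₁ ≤ x₁ := hle1 n
    have hxd1 : x₁ ≤ d₁ := hge1 n
    have hcx2 : c₂ ≤ x₂ := hle2 n
    have hxd2 : x₂ ≤ d₂ := hge2 n
    have hcd1 : c₁ < d₁ := (hGood n).2.2.2.2.1
    have hcd2 : c₂ < d₂ := (hGood n).2.2.2.2.2.1
    have hDn : dDiff f (c₁, c₂) (d₁, d₂) = 0 := by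
      have e : dDiff f (c₁, c₂) (d₁, d₂) = dDiff f (seq n).1 (seq n).2 := by
        simp only [dDiff]; rfl
      rw [e]; exact (hGood n).2.2.2.2.2.2
    have key : ∀ y₁ y₂ : ℝ, |y₁ - x₁| < δ₁ → |y₂ - x₂| < δ₂ →
        |dDiff f (x₁, x₂) (y₁, y₂) - L * ((y₁ - x₁) * (y₂ - x₂))|
          ≤ ε * (|y₁ - x₁| * |y₂ - x₂|) := by
      intro y₁ y₂ hy1 hy2
      by_cases h1 : y₁ = x₁
      · have hzd : dDiff f (x₁, x₂) (y₁, y₂) = 0 := by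
          simp only [dDiff, h1]; ring
        rw [hzd, h1]
        simp [abs_nonneg, mul_nonneg, hε.le]
      · by_cases h2 : y₂ = x₂
        · have hzd : dDiff f (x₁, x₂) (y₁, y₂) = 0 := by
            simp only [dDiff, h2]; ring
          rw [hzd, h2]
          simp [abs_nonneg, mul_nonneg, hε.le]
        · have hy1' : 0 < |y₁ - x₁| := abs_pos.mpr (sub_ne_zero.mpr h1)
          have hy2' : 0 < |y₂ - x₂| := abs_pos.mpr (sub_ne_zero.mpr h2)
          have hsl := hslope (y₁, y₂) (Set.mem_univ _) hy1' hy1 hy2' hy2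
          have hsl' : |dDiff f (x₁, x₂) (y₁, y₂) / ((y₁ - x₁) * (y₂ - x₂)) - L| < ε := hsl
          have hm1 : y₁ - x₁ ≠ 0 := sub_ne_zero.mpr h1
          have hm2 : y₂ - x₂ ≠ 0 := sub_ne_zero.mpr h2
          have heq : dDiff f (x₁, x₂) (y₁, y₂) - L * ((y₁ - x₁) * (y₂ - x₂))
              = (dDiff f (x₁, x₂) (y₁, y₂) / ((y₁ - x₁) * (y₂ - x₂)) - L)
                * ((y₁ - x₁) * (y₂ - x₂)) := by
            field_simp
          rw [heq, abs_mul]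
          calc |dDiff f (x₁, x₂) (y₁, y₂) / ((y₁ - x₁) * (y₂ - x₂)) - L|
                * |(y₁ - x₁) * (y₂ - x₂)|
              ≤ ε * |(y₁ - x₁) * (y₂ - x₂)| :=
                mul_le_mul_of_nonneg_right hsl'.le (abs_nonneg _)
            _ = ε * (|y₁ - x₁| * |y₂ - x₂|) := by rw [abs_mul]
    have e1 := key d₁ d₂ (by rw [abs_of_nonneg (by linarith)]; linarith)
      (by rw [abs_of_nonneg (by linarith)]; linarith)
    have e2 := key c₁ d₂ (by rw [abs_of_nonpos (by linarith)]; linarith)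
      (by rw [abs_of_nonneg (by linarith)]; linarith)
    have e3 := key d₁ c₂ (by rw [abs_of_nonneg (by linarith)]; linarith)
      (by rw [abs_of_nonpos (by linarith)]; linarith)
    have e4 := key c₁ c₂ (by rw [abs_of_nonpos (by linarith)]; linarith)
      (by rw [abs_of_nonpos (by linarith)]; linarith)
    rw [abs_of_nonneg (by linarith : (0:ℝ) ≤ d₁ - x₁),
      abs_of_nonneg (by linarith : (0:ℝ) ≤ d₂ - x₂)] at e1
    rw [abs_of_nonpos (by linarith : c₁ - x₁ ≤ 0),
      abs_of_nonneg (by linarith : (0:ℝ) ≤ d₂ - x₂)] at e2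
    rw [abs_of_nonneg (by linarith : (0:ℝ) ≤ d₁ - x₁),
      abs_of_nonpos (by linarith : c₂ - x₂ ≤ 0)] at e3
    rw [abs_of_nonpos (by linarith : c₁ - x₁ ≤ 0),
      abs_of_nonpos (by linarith : c₂ - x₂ ≤ 0)] at e4
    have hcombo : dDiff f (x₁, x₂) (d₁, d₂) - dDiff f (x₁, x₂) (c₁, d₂)
        - dDiff f (x₁, x₂) (d₁, c₂) + dDiff f (x₁, x₂) (c₁, c₂) = 0 := by
      have e : dDiff f (x₁, x₂) (d₁, d₂) - dDiff f (x₁, x₂) (c₁, d₂)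
          - dDiff f (x₁, x₂) (d₁, c₂) + dDiff f (x₁, x₂) (c₁, c₂)
          = dDiff f (c₁, c₂) (d₁, d₂) := by
        simp only [dDiff]; ring
      rw [e, hDn]
    set A := dDiff f (x₁, x₂) (d₁, d₂) - L * ((d₁ - x₁) * (d₂ - x₂)) with hA
    set B := dDiff f (x₁, x₂) (c₁, d₂) - L * ((c₁ - x₁) * (d₂ - x₂)) with hB
    set C := dDiff f (x₁, x₂) (d₁, c₂) - L * ((d₁ - x₁) * (c₂ - x₂)) with hC
    set D := dDiff f (x₁, x₂) (c₁, c₂) - L * ((c₁ - x₁) * (c₂ - x₂)) with hD'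
    have hPeq : L * ((d₁ - c₁) * (d₂ - c₂)) = -(A - B - C + D) := by
      rw [hA, hB, hC, hD']; linear_combination hcombo
    have i3 : |A - B| ≤ |A| + |B| := abs_sub A B
    have i2 : |A - B - C| ≤ |A - B| + |C| := abs_sub (A - B) C
    have i1 : |A - B - C + D| ≤ |A - B - C| + |D| := abs_add_le _ _
    have hRsum : ε * ((d₁ - x₁) * (d₂ - x₂)) + ε * ((x₁ - c₁) * (d₂ - x₂))
        + ε * ((d₁ - x₁) * (x₂ - c₂)) + ε * ((x₁ - c₁) * (x₂ - c₂))
        = ε * ((d₁ - c₁) * (d₂ - c₂)) := by ring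
    have hpos : (0:ℝ) < (d₁ - c₁) * (d₂ - c₂) :=
      mul_pos (by linarith) (by linarith)
    have habsL : |L| * ((d₁ - c₁) * (d₂ - c₂)) ≤ ε * ((d₁ - c₁) * (d₂ - c₂)) := by
      have h1' : |L * ((d₁ - c₁) * (d₂ - c₂))| = |L| * ((d₁ - c₁) * (d₂ - c₂)) := by
        rw [abs_mul, abs_of_nonneg hpos.le]
      calc |L| * ((d₁ - c₁) * (d₂ - c₂)) = |L * ((d₁ - c₁) * (d₂ - c₂))| := h1'.symm
        _ = |-(A - B - C + D)| := by rw [hPeq]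
        _ = |A - B - C + D| := abs_neg _
        _ ≤ |A| + |B| + |C| + |D| := by linarith
        _ ≤ ε * ((d₁ - c₁) * (d₂ - c₂)) := by linarith [e1, e2, e3, e4, hRsum]
    exact le_of_mul_le_mul_right habsL hpos
  have hL0 : L = 0 := by
    by_contra hne
    have h1 := hLabs (|L| / 2) (by positivity)
    have h2 := abs_pos.mpr hne
    linarith
  exact ⟨(x₁, x₂), hmem, hL0 ▸ hL⟩
end
end

section
/- (Double Cauchy mean value theorem) Let a, b ∈ ℝ² with a < b, and let f, g : [a,b] → ℝ be double continuous on [a,b] and double differentiable on (a,b). Then there exists c ∈ (a,b) with f'(c)·Δ_a^b(g) = g'(c)·Δ_a^b(f). -/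
open Set Filter Topology MeasureTheory

noncomputable section

/-- Double continuity of a linear combination. -/
private lemma cont_comb (f g : ℝ × ℝ → ℝ) (c1 c2 : ℝ) (S₁ S₂ : Set ℝ)
    (hf : DoubleContinuousOn f S₁ S₂) (hg : DoubleContinuousOn g S₁ S₂) :
    DoubleContinuousOn (fun p => c1 * f p - c2 * g p) S₁ S₂ := by
  intro a₁ h₁ a₂ h₂
  obtain ⟨δ₁f, hδ₁f, δ₂f, hδ₂f, Hf1, Hf2⟩ := hf a₁ h₁ a₂ h₂
  obtain ⟨δ₁g, hδ₁g, δ₂g, hδ₂g, Hg1, Hg2⟩ := hg a₁ h₁ a₂ h₂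
  refine ⟨min δ₁f δ₁g, lt_min hδ₁f hδ₁g, min δ₂f δ₂g, lt_min hδ₂f hδ₂g, ?_, ?_⟩
  · intro x₁ hx₁
    have hxf : x₁ ∈ Set.Ioo (a₁ - δ₁f) (a₁ + δ₁f) ∩ S₁ := by
      obtain ⟨⟨hl, hr⟩, hs⟩ := hx₁
      exact ⟨⟨by have := min_le_left δ₁f δ₁g; linarith, by have := min_le_left δ₁f δ₁g; linarith⟩, hs⟩
    have hxg : x₁ ∈ Set.Ioo (a₁ - δ₁g) (a₁ + δ₁g) ∩ S₁ := by
      obtain ⟨⟨hl, hr⟩, hs⟩ := hx₁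
      exact ⟨⟨by have := min_le_right δ₁f δ₁g; linarith, by have := min_le_right δ₁f δ₁g; linarith⟩, hs⟩
    have := ((Hf1 x₁ hxf).const_mul c1).sub ((Hg1 x₁ hxg).const_mul c2)
    rw [mul_zero, mul_zero, sub_zero] at this
    exact this.congr fun x₂ => by simp only [dDiff]; ring
  · intro x₂ hx₂
    have hxf : x₂ ∈ Set.Ioo (a₂ - δ₂f) (a₂ + δ₂f) ∩ S₂ := by
      obtain ⟨⟨hl, hr⟩, hs⟩ := hx₂
      exact ⟨⟨by have := min_le_left δ₂f δ₂g; linarith, by have := min_le_left δ₂f δ₂g; linarith⟩, hs⟩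
    have hxg : x₂ ∈ Set.Ioo (a₂ - δ₂g) (a₂ + δ₂g) ∩ S₂ := by
      obtain ⟨⟨hl, hr⟩, hs⟩ := hx₂
      exact ⟨⟨by have := min_le_right δ₂f δ₂g; linarith, by have := min_le_right δ₂f δ₂g; linarith⟩, hs⟩
    have := ((Hf2 x₂ hxf).const_mul c1).sub ((Hg2 x₂ hxg).const_mul c2)
    rw [mul_zero, mul_zero, sub_zero] at this
    exact this.congr fun x₁ => by simp only [dDiff]; ring

/-- Swapping coordinates preserves double continuity. -/
private lemma swap_cont (h : ℝ × ℝ → ℝ) (S₁ S₂ : Set ℝ)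
    (hc : DoubleContinuousOn h S₁ S₂) :
    DoubleContinuousOn (fun p => h (p.2, p.1)) S₂ S₁ := by
  intro a₂ h₂ a₁ h₁
  obtain ⟨δ₁, hδ₁, δ₂, hδ₂, H1, H2⟩ := hc a₁ h₁ a₂ h₂
  refine ⟨δ₂, hδ₂, δ₁, hδ₁, ?_, ?_⟩
  · intro x₂ hx₂
    exact (H2 x₂ hx₂).congr fun x₁ => by simp only [dDiff]; ring
  · intro x₁ hx₁
    exact (H1 x₁ hx₁).congr fun x₂ => by simp only [dDiff]; ring

/-- Chained double continuity in the first variable. -/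
private lemma chain (h : ℝ × ℝ → ℝ) (A1 B1 A2 B2 : ℝ)
    (hcont : DoubleContinuousOn h (Set.Icc A1 B1) (Set.Icc A2 B2))
    (p₁ : ℝ) (hp₁ : p₁ ∈ Set.Icc A1 B1) (s t : ℝ)
    (hs : s ∈ Set.Icc A2 B2) (ht : t ∈ Set.Icc A2 B2) :
    Filter.Tendsto (fun x₁ => dDiff h (p₁, s) (x₁, t))
      (nhdsWithin p₁ (Set.Icc A1 B1 \ {p₁})) (nhds 0) := by
  classical
  set L := nhdsWithin p₁ (Set.Icc A1 B1 \ {p₁}) with hL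
  set P : ℝ → Prop := fun y => Filter.Tendsto (fun x₁ => dDiff h (p₁, s) (x₁, y)) L (nhds 0)
    with hP
  have H : ∀ q₂, q₂ ∈ Set.Icc A2 B2 → ∃ r > 0, ∀ x₂ ∈ Set.Ioo (q₂ - r) (q₂ + r) ∩ Set.Icc A2 B2,
      Filter.Tendsto (fun x₁ => dDiff h (p₁, q₂) (x₁, x₂)) L (nhds 0) := by
    intro q₂ hq₂
    obtain ⟨δ₁, hδ₁, δ₂, hδ₂, _, H2⟩ := hcont p₁ hp₁ q₂ hq₂
    exact ⟨δ₂, hδ₂, H2⟩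
  choose r hr hH using H
  have equiv : ∀ q₂ (hq₂ : q₂ ∈ Set.Icc A2 B2), ∀ x₂ ∈ Set.Icc A2 B2,
      x₂ ∈ Set.Ioo (q₂ - r q₂ hq₂) (q₂ + r q₂ hq₂) → (P x₂ ↔ P q₂) := by
    intro q₂ hq₂ x₂ hx₂ hIoo
    have key := hH q₂ hq₂ x₂ ⟨hIoo, hx₂⟩
    simp only [hP]
    constructor
    · intro hx
      have h2 := hx.sub key
      rw [sub_zero] at h2
      exact h2.congr fun x₁ => by simp only [dDiff]; ring
    · intro hq
      have h2 := hq.add key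
      rw [add_zero] at h2
      exact h2.congr fun x₁ => by simp only [dDiff]; ring
  have hPs : P s := by
    have heq : (fun x₁ => dDiff h (p₁, s) (x₁, s)) = fun _ => (0 : ℝ) := by
      funext x₁; simp only [dDiff]; ring
    simp only [hP, heq]
    exact tendsto_const_nhds
  by_contra hPt
  set U : Set ℝ := ⋃ (q₂ : ℝ) (hq : q₂ ∈ Set.Icc A2 B2 ∧ P q₂),
    Set.Ioo (q₂ - r q₂ hq.1) (q₂ + r q₂ hq.1) with hU
  set V : Set ℝ := ⋃ (q₂ : ℝ) (hq : q₂ ∈ Set.Icc A2 B2 ∧ ¬ P q₂),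
    Set.Ioo (q₂ - r q₂ hq.1) (q₂ + r q₂ hq.1) with hV
  have hUo : IsOpen U := isOpen_iUnion fun _ => isOpen_iUnion fun _ => isOpen_Ioo
  have hVo : IsOpen V := isOpen_iUnion fun _ => isOpen_iUnion fun _ => isOpen_Ioo
  have hself : ∀ q₂ (hq₂ : q₂ ∈ Set.Icc A2 B2),
      q₂ ∈ Set.Ioo (q₂ - r q₂ hq₂) (q₂ + r q₂ hq₂) := by
    intro q₂ hq₂
    constructor <;> [linarith [hr q₂ hq₂]; linarith [hr q₂ hq₂]]
  have hsub : Set.Icc A2 B2 ⊆ U ∪ V := by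
    intro y hy
    by_cases hPy : P y
    · exact Or.inl (Set.mem_iUnion.2 ⟨y, Set.mem_iUnion.2 ⟨⟨hy, hPy⟩, hself y hy⟩⟩)
    · exact Or.inr (Set.mem_iUnion.2 ⟨y, Set.mem_iUnion.2 ⟨⟨hy, hPy⟩, hself y hy⟩⟩)
  have hsU : (Set.Icc A2 B2 ∩ U).Nonempty :=
    ⟨s, hs, Set.mem_iUnion.2 ⟨s, Set.mem_iUnion.2 ⟨⟨hs, hPs⟩, hself s hs⟩⟩⟩
  have hsV : (Set.Icc A2 B2 ∩ V).Nonempty :=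
    ⟨t, ht, Set.mem_iUnion.2 ⟨t, Set.mem_iUnion.2 ⟨⟨ht, hPt⟩, hself t ht⟩⟩⟩
  obtain ⟨y, hyIcc, hyU, hyV⟩ := isPreconnected_Icc U V hUo hVo hsub hsU hsV
  obtain ⟨q, hqmem⟩ := Set.mem_iUnion.1 hyU
  obtain ⟨hq, hyIoo⟩ := Set.mem_iUnion.1 hqmem
  obtain ⟨q', hqmem'⟩ := Set.mem_iUnion.1 hyV
  obtain ⟨hq', hyIoo'⟩ := Set.mem_iUnion.1 hqmem'
  have hPy : P y := (equiv q hq.1 y hyIcc hyIoo).2 hq.2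
  have hPy' : ¬ P y := fun hy => hq'.2 ((equiv q' hq'.1 y hyIcc hyIoo').1 hy)
  exact hPy' hPy

/-- Continuity of `r ↦ Δ h (u₁,u₂) (r,v₂)` on the first interval. -/
private lemma psi_cont (h : ℝ × ℝ → ℝ) (A1 B1 A2 B2 u₁ u₂ v₂ : ℝ)
    (hcont : DoubleContinuousOn h (Set.Icc A1 B1) (Set.Icc A2 B2))
    (hu₂ : u₂ ∈ Set.Icc A2 B2) (hv₂ : v₂ ∈ Set.Icc A2 B2) :
    ContinuousOn (fun r => dDiff h (u₁, u₂) (r, v₂)) (Set.Icc A1 B1) := by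
  intro p₁ hp₁
  have key := chain h A1 B1 A2 B2 hcont p₁ hp₁ u₂ v₂ hu₂ hv₂
  have h1 : Filter.Tendsto (fun r => dDiff h (u₁, u₂) (r, v₂))
      (nhdsWithin p₁ (Set.Icc A1 B1 \ {p₁})) (nhds (dDiff h (u₁, u₂) (p₁, v₂))) := by
    have h2 := key.add (tendsto_const_nhds (x := dDiff h (u₁, u₂) (p₁, v₂))
      (f := nhdsWithin p₁ (Set.Icc A1 B1 \ {p₁})))
    rw [zero_add] at h2
    exact h2.congr fun x₁ => by simp only [dDiff]; ring
  have h2 : Filter.Tendsto (fun r => dDiff h (u₁, u₂) (r, v₂))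
      (nhdsWithin p₁ {p₁}) (nhds (dDiff h (u₁, u₂) (p₁, v₂))) := by
    rw [nhdsWithin_singleton]
    exact tendsto_pure_nhds _ _
  have hmono : nhdsWithin p₁ (Set.Icc A1 B1) ≤
      nhdsWithin p₁ (Set.Icc A1 B1 \ {p₁}) ⊔ nhdsWithin p₁ {p₁} := by
    rw [← nhdsWithin_union]
    exact nhdsWithin_mono _ (fun x hx => by
      by_cases hx' : x = p₁
      · exact Or.inr hx'
      · exact Or.inl ⟨hx, hx'⟩)
  exact (Filter.tendsto_sup.2 ⟨h1, h2⟩).mono_left hmono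

/-- IVT step in the first coordinate, pushing the left edge inward. -/
private lemma stepMax1 (h : ℝ × ℝ → ℝ) (A1 B1 A2 B2 : ℝ)
    (hcont : DoubleContinuousOn h (Set.Icc A1 B1) (Set.Icc A2 B2))
    (u₁ v₁ u₂ v₂ : ℝ)
    (h1a : A1 ≤ u₁) (h1b : v₁ ≤ B1) (h1 : u₁ < v₁)
    (h2a : A2 ≤ u₂) (h2b : v₂ ≤ B2) (h2 : u₂ < v₂)
    (hΔ : dDiff h (u₁, u₂) (v₁, v₂) = 0) :
    ∃ t, u₁ < t ∧ t + (v₁ - u₁) / 2 ≤ v₁ ∧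
      dDiff h (t, u₂) (t + (v₁ - u₁) / 2, v₂) = 0 := by
  obtain ⟨w, hwpos, he⟩ : ∃ w, 0 < w ∧ u₁ + w + w = v₁ :=
    ⟨(v₁ - u₁) / 2, by linarith, by ring⟩
  have hweq : (v₁ - u₁) / 2 = w := by linarith
  rw [← he] at hΔ
  set φ : ℝ → ℝ := fun t => dDiff h (t, u₂) (t + w, v₂) with hφ
  have hψ : ContinuousOn (fun r => dDiff h (u₁, u₂) (r, v₂)) (Set.Icc A1 B1) :=
    psi_cont h A1 B1 A2 B2 u₁ u₂ v₂ hcont ⟨h2a, le_trans h2.le h2b⟩ ⟨le_trans h2a h2.le, h2b⟩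
  have hφcont : ContinuousOn φ (Set.Icc u₁ (u₁ + w)) := by
    have hmap1 : Set.MapsTo (fun t => t + w) (Set.Icc u₁ (u₁ + w)) (Set.Icc A1 B1) := by
      intro x hx
      obtain ⟨hl, hr⟩ := hx
      exact ⟨show A1 ≤ x + w by linarith, show x + w ≤ B1 by linarith⟩
    have hmap2 : Set.Icc u₁ (u₁ + w) ⊆ Set.Icc A1 B1 := by
      intro x hx
      exact ⟨by obtain ⟨hl, hr⟩ := hx; linarith, by obtain ⟨hl, hr⟩ := hx; linarith⟩
    have c1 : ContinuousOn (fun t => dDiff h (u₁, u₂) (t + w, v₂)) (Set.Icc u₁ (u₁ + w)) :=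
      hψ.comp ((continuous_id.add continuous_const).continuousOn) hmap1
    have c2 : ContinuousOn (fun t => dDiff h (u₁, u₂) (t, v₂)) (Set.Icc u₁ (u₁ + w)) :=
      hψ.mono hmap2
    exact (c1.sub c2).congr fun t _ => by simp only [hφ, dDiff, Pi.sub_apply]; ring
  have hsum : φ u₁ + φ (u₁ + w) = 0 := by
    simp only [hφ, dDiff] at hΔ ⊢
    linarith
  have hue : u₁ ≤ u₁ + w := by linarith
  have hZne : ∃ t₀ ∈ Set.Icc u₁ (u₁ + w), φ t₀ = 0 := by
    rcases le_total (φ u₁) 0 with hc | hc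
    · have h0 : (0 : ℝ) ∈ Set.Icc (φ u₁) (φ (u₁ + w)) := ⟨hc, by linarith⟩
      obtain ⟨t₀, ht₀, hφt₀⟩ := intermediate_value_Icc hue hφcont h0
      exact ⟨t₀, ht₀, hφt₀⟩
    · have h0 : (0 : ℝ) ∈ Set.Icc (φ (u₁ + w)) (φ u₁) := ⟨by linarith, hc⟩
      obtain ⟨t₀, ht₀, hφt₀⟩ := intermediate_value_Icc' hue hφcont h0
      exact ⟨t₀, ht₀, hφt₀⟩
  set Z : Set ℝ := Set.Icc u₁ (u₁ + w) ∩ φ ⁻¹' {0} with hZ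
  have hZne' : Z.Nonempty := by
    obtain ⟨t₀, ht₀, hφt₀⟩ := hZne
    exact ⟨t₀, ht₀, by simpa using hφt₀⟩
  have hZclosed : IsClosed Z :=
    hφcont.preimage_isClosed_of_isClosed isClosed_Icc isClosed_singleton
  have hZbdd : BddAbove Z := BddAbove.mono Set.inter_subset_left bddAbove_Icc
  have htmax : sSup Z ∈ Z := hZclosed.csSup_mem hZne' hZbdd
  obtain ⟨⟨htl, htu⟩, htz⟩ := htmax
  have htz' : φ (sSup Z) = 0 := by simpa using htz
  by_cases hcase : u₁ < sSup Z
  · refine ⟨sSup Z, hcase, by rw [hweq]; linarith, by rw [hweq]; exact htz'⟩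
  · exfalso
    have heq : sSup Z = u₁ := le_antisymm (not_lt.1 hcase) htl
    have hφu : φ u₁ = 0 := by rw [← heq]; exact htz'
    have hφe : φ (u₁ + w) = 0 := by linarith
    have : u₁ + w ∈ Z := ⟨⟨hue, le_refl _⟩, by simpa using hφe⟩
    have := le_csSup hZbdd this
    rw [heq] at this
    linarith

/-- IVT step in the first coordinate, pushing the right edge inward. -/
private lemma stepMin1 (h : ℝ × ℝ → ℝ) (A1 B1 A2 B2 : ℝ)
    (hcont : DoubleContinuousOn h (Set.Icc A1 B1) (Set.Icc A2 B2))
    (u₁ v₁ u₂ v₂ : ℝ)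
    (h1a : A1 ≤ u₁) (h1b : v₁ ≤ B1) (h1 : u₁ < v₁)
    (h2a : A2 ≤ u₂) (h2b : v₂ ≤ B2) (h2 : u₂ < v₂)
    (hΔ : dDiff h (u₁, u₂) (v₁, v₂) = 0) :
    ∃ t, u₁ ≤ t ∧ t + (v₁ - u₁) / 2 < v₁ ∧
      dDiff h (t, u₂) (t + (v₁ - u₁) / 2, v₂) = 0 := by
  obtain ⟨w, hwpos, he⟩ : ∃ w, 0 < w ∧ u₁ + w + w = v₁ :=
    ⟨(v₁ - u₁) / 2, by linarith, by ring⟩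
  have hweq : (v₁ - u₁) / 2 = w := by linarith
  rw [← he] at hΔ
  set φ : ℝ → ℝ := fun t => dDiff h (t, u₂) (t + w, v₂) with hφ
  have hψ : ContinuousOn (fun r => dDiff h (u₁, u₂) (r, v₂)) (Set.Icc A1 B1) :=
    psi_cont h A1 B1 A2 B2 u₁ u₂ v₂ hcont ⟨h2a, le_trans h2.le h2b⟩ ⟨le_trans h2a h2.le, h2b⟩
  have hφcont : ContinuousOn φ (Set.Icc u₁ (u₁ + w)) := by
    have hmap1 : Set.MapsTo (fun t => t + w) (Set.Icc u₁ (u₁ + w)) (Set.Icc A1 B1) := by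
      intro x hx
      obtain ⟨hl, hr⟩ := hx
      exact ⟨show A1 ≤ x + w by linarith, show x + w ≤ B1 by linarith⟩
    have hmap2 : Set.Icc u₁ (u₁ + w) ⊆ Set.Icc A1 B1 := by
      intro x hx
      exact ⟨by obtain ⟨hl, hr⟩ := hx; linarith, by obtain ⟨hl, hr⟩ := hx; linarith⟩
    have c1 : ContinuousOn (fun t => dDiff h (u₁, u₂) (t + w, v₂)) (Set.Icc u₁ (u₁ + w)) :=
      hψ.comp ((continuous_id.add continuous_const).continuousOn) hmap1
    have c2 : ContinuousOn (fun t => dDiff h (u₁, u₂) (t, v₂)) (Set.Icc u₁ (u₁ + w)) :=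
      hψ.mono hmap2
    exact (c1.sub c2).congr fun t _ => by simp only [hφ, dDiff, Pi.sub_apply]; ring
  have hsum : φ u₁ + φ (u₁ + w) = 0 := by
    simp only [hφ, dDiff] at hΔ ⊢
    linarith
  have hue : u₁ ≤ u₁ + w := by linarith
  have hZne : ∃ t₀ ∈ Set.Icc u₁ (u₁ + w), φ t₀ = 0 := by
    rcases le_total (φ u₁) 0 with hc | hc
    · have h0 : (0 : ℝ) ∈ Set.Icc (φ u₁) (φ (u₁ + w)) := ⟨hc, by linarith⟩
      obtain ⟨t₀, ht₀, hφt₀⟩ := intermediate_value_Icc hue hφcont h0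
      exact ⟨t₀, ht₀, hφt₀⟩
    · have h0 : (0 : ℝ) ∈ Set.Icc (φ (u₁ + w)) (φ u₁) := ⟨by linarith, hc⟩
      obtain ⟨t₀, ht₀, hφt₀⟩ := intermediate_value_Icc' hue hφcont h0
      exact ⟨t₀, ht₀, hφt₀⟩
  set Z : Set ℝ := Set.Icc u₁ (u₁ + w) ∩ φ ⁻¹' {0} with hZ
  have hZne' : Z.Nonempty := by
    obtain ⟨t₀, ht₀, hφt₀⟩ := hZne
    exact ⟨t₀, ht₀, by simpa using hφt₀⟩
  have hZclosed : IsClosed Z :=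
    hφcont.preimage_isClosed_of_isClosed isClosed_Icc isClosed_singleton
  have hZbdd : BddBelow Z := BddBelow.mono Set.inter_subset_left bddBelow_Icc
  have htmin : sInf Z ∈ Z := hZclosed.csInf_mem hZne' hZbdd
  obtain ⟨⟨htl, htu⟩, htz⟩ := htmin
  have htz' : φ (sInf Z) = 0 := by simpa using htz
  by_cases hcase : sInf Z < u₁ + w
  · refine ⟨sInf Z, htl, by rw [hweq]; linarith, by rw [hweq]; exact htz'⟩
  · exfalso
    have heq : sInf Z = u₁ + w := le_antisymm htu (not_lt.1 hcase)
    have hφe : φ (u₁ + w) = 0 := by rw [← heq]; exact htz'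
    have hφu : φ u₁ = 0 := by linarith
    have : u₁ ∈ Z := ⟨⟨le_refl _, hue⟩, by simpa using hφu⟩
    have := csInf_le hZbdd this
    rw [heq] at this
    linarith

/-- IVT step in the second coordinate, pushing the bottom edge inward. -/
private lemma stepMax2 (h : ℝ × ℝ → ℝ) (A1 B1 A2 B2 : ℝ)
    (hcont : DoubleContinuousOn h (Set.Icc A1 B1) (Set.Icc A2 B2))
    (u₁ v₁ u₂ v₂ : ℝ)
    (h1a : A1 ≤ u₁) (h1b : v₁ ≤ B1) (h1 : u₁ < v₁)
    (h2a : A2 ≤ u₂) (h2b : v₂ ≤ B2) (h2 : u₂ < v₂)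
    (hΔ : dDiff h (u₁, u₂) (v₁, v₂) = 0) :
    ∃ t, u₂ < t ∧ t + (v₂ - u₂) / 2 ≤ v₂ ∧
      dDiff h (u₁, t) (v₁, t + (v₂ - u₂) / 2) = 0 := by
  obtain ⟨t, ht1, ht2, ht3⟩ := stepMax1 (fun p => h (p.2, p.1)) A2 B2 A1 B1
    (swap_cont h (Set.Icc A1 B1) (Set.Icc A2 B2) hcont) u₂ v₂ u₁ v₁
    h2a h2b h2 h1a h1b h1 (by simp only [dDiff] at hΔ ⊢; linarith)
  refine ⟨t, ht1, ht2, ?_⟩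
  simp only [dDiff] at ht3 ⊢
  linarith

/-- IVT step in the second coordinate, pushing the top edge inward. -/
private lemma stepMin2 (h : ℝ × ℝ → ℝ) (A1 B1 A2 B2 : ℝ)
    (hcont : DoubleContinuousOn h (Set.Icc A1 B1) (Set.Icc A2 B2))
    (u₁ v₁ u₂ v₂ : ℝ)
    (h1a : A1 ≤ u₁) (h1b : v₁ ≤ B1) (h1 : u₁ < v₁)
    (h2a : A2 ≤ u₂) (h2b : v₂ ≤ B2) (h2 : u₂ < v₂)
    (hΔ : dDiff h (u₁, u₂) (v₁, v₂) = 0) :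
    ∃ t, u₂ ≤ t ∧ t + (v₂ - u₂) / 2 < v₂ ∧
      dDiff h (u₁, t) (v₁, t + (v₂ - u₂) / 2) = 0 := by
  obtain ⟨t, ht1, ht2, ht3⟩ := stepMin1 (fun p => h (p.2, p.1)) A2 B2 A1 B1
    (swap_cont h (Set.Icc A1 B1) (Set.Icc A2 B2) hcont) u₂ v₂ u₁ v₁
    h2a h2b h2 h1a h1b h1 (by simp only [dDiff] at hΔ ⊢; linarith)
  refine ⟨t, ht1, ht2, ?_⟩
  simp only [dDiff] at ht3 ⊢
  linarith

/-- One full shrinking step: quarter both widths, all four edges move strictly inward. -/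
private lemma shrink (h : ℝ × ℝ → ℝ) (A1 B1 A2 B2 : ℝ)
    (hcont : DoubleContinuousOn h (Set.Icc A1 B1) (Set.Icc A2 B2))
    (u v : ℝ × ℝ) (h1a : A1 ≤ u.1) (h1b : v.1 ≤ B1) (h1 : u.1 < v.1)
    (h2a : A2 ≤ u.2) (h2b : v.2 ≤ B2) (h2 : u.2 < v.2)
    (hΔ : dDiff h u v = 0) :
    ∃ u' v' : ℝ × ℝ, A1 ≤ u'.1 ∧ v'.1 ≤ B1 ∧ u'.1 < v'.1 ∧
      A2 ≤ u'.2 ∧ v'.2 ≤ B2 ∧ u'.2 < v'.2 ∧ dDiff h u' v' = 0 ∧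
      u.1 < u'.1 ∧ u.2 < u'.2 ∧ v'.1 < v.1 ∧ v'.2 < v.2 ∧
      v'.1 - u'.1 = (v.1 - u.1) / 4 ∧ v'.2 - u'.2 = (v.2 - u.2) / 4 := by
  have hΔ' : dDiff h (u.1, u.2) (v.1, v.2) = 0 := by
    simp only [dDiff] at hΔ ⊢; linarith
  -- step 1 : max in coordinate 1
  obtain ⟨t1, ht1a, ht1b, ht1Δ⟩ := stepMax1 h A1 B1 A2 B2 hcont u.1 v.1 u.2 v.2
    h1a h1b h1 h2a h2b h2 hΔ'
  have hw2 : 0 < (v.1 - u.1) / 2 := by linarith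
  -- step 2 : min in coordinate 1
  obtain ⟨t2, ht2a, ht2b, ht2Δ⟩ := stepMin1 h A1 B1 A2 B2 hcont t1 (t1 + (v.1 - u.1) / 2) u.2 v.2
    (by linarith) (by linarith) (by linarith) h2a h2b h2 ht1Δ
  rw [show (t1 + (v.1 - u.1) / 2 - t1) / 2 = (v.1 - u.1) / 4 by ring] at ht2b ht2Δ
  -- step 3 : max in coordinate 2
  obtain ⟨s1, hs1a, hs1b, hs1Δ⟩ := stepMax2 h A1 B1 A2 B2 hcont t2 (t2 + (v.1 - u.1) / 4) u.2 v.2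
    (by linarith) (by linarith) (by linarith) h2a h2b h2 ht2Δ
  have hh2 : 0 < (v.2 - u.2) / 2 := by linarith
  -- step 4 : min in coordinate 2
  obtain ⟨s2, hs2a, hs2b, hs2Δ⟩ := stepMin2 h A1 B1 A2 B2 hcont t2 (t2 + (v.1 - u.1) / 4)
    s1 (s1 + (v.2 - u.2) / 2)
    (by linarith) (by linarith) (by linarith) (by linarith) (by linarith) (by linarith) hs1Δ
  rw [show (s1 + (v.2 - u.2) / 2 - s1) / 2 = (v.2 - u.2) / 4 by ring] at hs2b hs2Δ
  refine ⟨(t2, s2), (t2 + (v.1 - u.1) / 4, s2 + (v.2 - u.2) / 4), ?_, ?_, ?_, ?_, ?_, ?_, ?_,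
    ?_, ?_, ?_, ?_, ?_, ?_⟩ <;>
    try dsimp only
  · linarith
  · linarith
  · linarith
  · linarith
  · linarith
  · linarith
  · exact hs2Δ
  · linarith
  · linarith
  · linarith
  · linarith
  · ring
  · ring

/-- Nested sequence of rectangles with zero double difference, shrinking to a point. -/
private lemma nested (h : ℝ × ℝ → ℝ) (A1 B1 A2 B2 : ℝ)
    (hcont : DoubleContinuousOn h (Set.Icc A1 B1) (Set.Icc A2 B2))
    (hAB1 : A1 < B1) (hAB2 : A2 < B2) (hΔ : dDiff h (A1, A2) (B1, B2) = 0) :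
    ∃ U V : ℕ → ℝ × ℝ,
      U 0 = (A1, A2) ∧ V 0 = (B1, B2) ∧
      (∀ n, A1 ≤ (U n).1 ∧ (V n).1 ≤ B1 ∧ (U n).1 < (V n).1 ∧
            A2 ≤ (U n).2 ∧ (V n).2 ≤ B2 ∧ (U n).2 < (V n).2 ∧ dDiff h (U n) (V n) = 0) ∧
      (∀ n, (U n).1 < (U (n + 1)).1 ∧ (U n).2 < (U (n + 1)).2 ∧
            (V (n + 1)).1 < (V n).1 ∧ (V (n + 1)).2 < (V n).2) ∧
      (∀ n, (V n).1 - (U n).1 = (B1 - A1) / 4 ^ n ∧ (V n).2 - (U n).2 = (B2 - A2) / 4 ^ n) := by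
  classical
  set Good : (ℝ × ℝ) × (ℝ × ℝ) → Prop := fun p =>
    A1 ≤ p.1.1 ∧ p.2.1 ≤ B1 ∧ p.1.1 < p.2.1 ∧ A2 ≤ p.1.2 ∧ p.2.2 ≤ B2 ∧ p.1.2 < p.2.2 ∧
      dDiff h p.1 p.2 = 0 with hGood
  have hstep : ∀ p : {p // Good p}, ∃ q : {p // Good p},
      p.1.1.1 < q.1.1.1 ∧ p.1.1.2 < q.1.1.2 ∧ q.1.2.1 < p.1.2.1 ∧ q.1.2.2 < p.1.2.2 ∧
      q.1.2.1 - q.1.1.1 = (p.1.2.1 - p.1.1.1) / 4 ∧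
      q.1.2.2 - q.1.1.2 = (p.1.2.2 - p.1.1.2) / 4 := by
    rintro ⟨⟨u, v⟩, hg⟩
    obtain ⟨g1, g2, g3, g4, g5, g6, g7⟩ := hg
    obtain ⟨u', v', k1, k2, k3, k4, k5, k6, k7, k8, k9, k10, k11, k12, k13⟩ :=
      shrink h A1 B1 A2 B2 hcont u v g1 g2 g3 g4 g5 g6 g7
    exact ⟨⟨(u', v'), ⟨k1, k2, k3, k4, k5, k6, k7⟩⟩, k8, k9, k10, k11, k12, k13⟩
  choose F hF1 hF2 hF3 hF4 hF5 hF6 using hstep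
  have g0 : Good ((A1, A2), (B1, B2)) :=
    ⟨le_refl _, le_refl _, hAB1, le_refl _, le_refl _, hAB2, hΔ⟩
  set sq : ℕ → {p // Good p} := fun n => F^[n] ⟨((A1, A2), (B1, B2)), g0⟩ with hsq
  have hsucc : ∀ n, sq (n + 1) = F (sq n) := fun n => Function.iterate_succ_apply' F n _
  refine ⟨fun n => (sq n).1.1, fun n => (sq n).1.2, rfl, rfl, ?_, ?_, ?_⟩
  · intro n
    exact (sq n).2
  · intro n
    dsimp only
    rw [hsucc n]
    exact ⟨hF1 _, hF2 _, hF3 _, hF4 _⟩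
  · intro n
    induction n with
    | zero => norm_num [hsq]
    | succ n ih =>
      dsimp only at ih ⊢
      rw [hsucc n]
      constructor
      · rw [hF5 _, ih.1, pow_succ]
        ring
      · rw [hF6 _, ih.2, pow_succ]
        ring

/-- Double derivative of a linear combination. -/
private lemma deriv_comb (f g : ℝ × ℝ → ℝ) (c1 c2 : ℝ) (c : ℝ × ℝ) (Lf Lg : ℝ)
    (hf : HasDoubleDerivAt f c Lf) (hg : HasDoubleDerivAt g c Lg) :
    HasDoubleDerivAt (fun p => c1 * f p - c2 * g p) c (c1 * Lf - c2 * Lg) := by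
  intro ε hε
  obtain ⟨δ₁f, hδ₁f, δ₂f, hδ₂f, Hf⟩ := hf (ε / (2 * (|c1| + 1))) (by positivity)
  obtain ⟨δ₁g, hδ₁g, δ₂g, hδ₂g, Hg⟩ := hg (ε / (2 * (|c2| + 1))) (by positivity)
  refine ⟨min δ₁f δ₁g, lt_min hδ₁f hδ₁g, min δ₂f δ₂g, lt_min hδ₂f hδ₂g, ?_⟩
  intro x hx p1 p1' p2 p2'
  have hf' := Hf x hx p1 (lt_of_lt_of_le p1' (min_le_left _ _)) p2
    (lt_of_lt_of_le p2' (min_le_left _ _))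
  have hg' := Hg x hx p1 (lt_of_lt_of_le p1' (min_le_right _ _)) p2
    (lt_of_lt_of_le p2' (min_le_right _ _))
  simp only at hf' hg' ⊢
  have hsl : dSlope (fun p => c1 * f p - c2 * g p) c x
      = c1 * dSlope f c x - c2 * dSlope g c x := by
    have hnum : dDiff (fun p => c1 * f p - c2 * g p) c x
        = c1 * dDiff f c x - c2 * dDiff g c x := by
      simp only [dDiff]; ring
    simp only [dSlope, hnum, sub_div, mul_div_assoc]
  rw [hsl]
  have key : c1 * dSlope f c x - c2 * dSlope g c x - (c1 * Lf - c2 * Lg)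
      = c1 * (dSlope f c x - Lf) - c2 * (dSlope g c x - Lg) := by ring
  rw [key]
  have tri : |c1 * (dSlope f c x - Lf) - c2 * (dSlope g c x - Lg)|
      ≤ |c1| * |dSlope f c x - Lf| + |c2| * |dSlope g c x - Lg| := by
    have habs := abs_add_le (c1 * (dSlope f c x - Lf)) (-(c2 * (dSlope g c x - Lg)))
    rw [← sub_eq_add_neg, abs_neg, abs_mul, abs_mul] at habs
    exact habs
  have b1 : |c1| * |dSlope f c x - Lf| ≤ |c1| * (ε / (2 * (|c1| + 1))) :=
    mul_le_mul_of_nonneg_left hf'.le (abs_nonneg _)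
  have b2 : |c2| * |dSlope g c x - Lg| ≤ |c2| * (ε / (2 * (|c2| + 1))) :=
    mul_le_mul_of_nonneg_left hg'.le (abs_nonneg _)
  have hne1 : |c1| + 1 ≠ 0 := by positivity
  have hne2 : |c2| + 1 ≠ 0 := by positivity
  have b1' : |c1| * (ε / (2 * (|c1| + 1))) < ε / 2 := by
    have hlt : |c1| * (ε / (2 * (|c1| + 1))) < (|c1| + 1) * (ε / (2 * (|c1| + 1))) :=
      mul_lt_mul_of_pos_right (by linarith) (by positivity)
    have heq : (|c1| + 1) * (ε / (2 * (|c1| + 1))) = ε / 2 := by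
      field_simp
    linarith
  have b2' : |c2| * (ε / (2 * (|c2| + 1))) < ε / 2 := by
    have hlt : |c2| * (ε / (2 * (|c2| + 1))) < (|c2| + 1) * (ε / (2 * (|c2| + 1))) :=
      mul_lt_mul_of_pos_right (by linarith) (by positivity)
    have heq : (|c2| + 1) * (ε / (2 * (|c2| + 1))) = ε / 2 := by
      field_simp
    linarith
  linarith

set_option maxHeartbeats 2000000 in
/-- double Cauchy mean value theorem. -/
theorem stmt11 (f g : ℝ × ℝ → ℝ) (a b : ℝ × ℝ)
    (hab1 : a.1 < b.1) (hab2 : a.2 < b.2)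
    (hfcont : DoubleContinuousOn f (Set.Icc a.1 b.1) (Set.Icc a.2 b.2))
    (hgcont : DoubleContinuousOn g (Set.Icc a.1 b.1) (Set.Icc a.2 b.2))
    (hfdiff : ∀ x ∈ Set.Ioo a.1 b.1 ×ˢ Set.Ioo a.2 b.2, ∃ L, HasDoubleDerivAt f x L)
    (hgdiff : ∀ x ∈ Set.Ioo a.1 b.1 ×ˢ Set.Ioo a.2 b.2, ∃ L, HasDoubleDerivAt g x L) :
    ∃ c ∈ Set.Ioo a.1 b.1 ×ˢ Set.Ioo a.2 b.2, ∃ Lf Lg,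
      HasDoubleDerivAt f c Lf ∧ HasDoubleDerivAt g c Lg ∧
      Lf * dDiff g a b = Lg * dDiff f a b := by
  classical
  set h : ℝ × ℝ → ℝ := fun p => dDiff g a b * f p - dDiff f a b * g p with hhdef
  have hconth : DoubleContinuousOn h (Set.Icc a.1 b.1) (Set.Icc a.2 b.2) :=
    cont_comb f g (dDiff g a b) (dDiff f a b) _ _ hfcont hgcont
  have hΔh : dDiff h (a.1, a.2) (b.1, b.2) = 0 := by
    simp only [hhdef, dDiff]
    ring
  obtain ⟨U, V, hU0, hV0, hinv, hmono, hwid⟩ :=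
    nested h a.1 b.1 a.2 b.2 hconth hab1 hab2 hΔh
  have hu1mono : StrictMono fun n => (U n).1 := strictMono_nat_of_lt_succ fun n => (hmono n).1
  have hu2mono : StrictMono fun n => (U n).2 := strictMono_nat_of_lt_succ fun n => (hmono n).2.1
  have hv1anti : StrictAnti fun n => (V n).1 := strictAnti_nat_of_succ_lt fun n => (hmono n).2.2.1
  have hv2anti : StrictAnti fun n => (V n).2 := strictAnti_nat_of_succ_lt fun n => (hmono n).2.2.2
  have cross1 : ∀ m n, (U m).1 < (V n).1 := by
    intro m n
    rcases le_total m n with hle | hle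
    · exact lt_of_le_of_lt (hu1mono.monotone hle) (hinv n).2.2.1
    · exact lt_of_lt_of_le (hinv m).2.2.1 (hv1anti.antitone hle)
  have cross2 : ∀ m n, (U m).2 < (V n).2 := by
    intro m n
    rcases le_total m n with hle | hle
    · exact lt_of_le_of_lt (hu2mono.monotone hle) (hinv n).2.2.2.2.2.1
    · exact lt_of_lt_of_le (hinv m).2.2.2.2.2.1 (hv2anti.antitone hle)
  have hbdd1 : BddAbove (Set.range fun n => (U n).1) := by
    refine ⟨(V 0).1, ?_⟩
    rintro x ⟨n, rfl⟩
    exact (cross1 n 0).le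
  have hbdd2 : BddAbove (Set.range fun n => (U n).2) := by
    refine ⟨(V 0).2, ?_⟩
    rintro x ⟨n, rfl⟩
    exact (cross2 n 0).le
  set c1 : ℝ := ⨆ n, (U n).1 with hc1def
  set c2 : ℝ := ⨆ n, (U n).2 with hc2def
  have hc1ub : ∀ n, (U n).1 ≤ c1 := fun n => le_ciSup hbdd1 n
  have hc2ub : ∀ n, (U n).2 ≤ c2 := fun n => le_ciSup hbdd2 n
  have hc1lb : ∀ n, c1 ≤ (V n).1 := fun n => ciSup_le fun m => (cross1 m n).le
  have hc2lb : ∀ n, c2 ≤ (V n).2 := fun n => ciSup_le fun m => (cross2 m n).le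
  have hu01 : (U 0).1 = a.1 := by rw [hU0]
  have hu02 : (U 0).2 = a.2 := by rw [hU0]
  have hv01 : (V 0).1 = b.1 := by rw [hV0]
  have hv02 : (V 0).2 = b.2 := by rw [hV0]
  have hcmem : (c1, c2) ∈ Set.Ioo a.1 b.1 ×ˢ Set.Ioo a.2 b.2 := by
    refine ⟨⟨?_, ?_⟩, ⟨?_, ?_⟩⟩
    · calc a.1 = (U 0).1 := hu01.symm
        _ < (U 1).1 := (hmono 0).1
        _ ≤ c1 := hc1ub 1
    · calc c1 ≤ (V 1).1 := hc1lb 1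
        _ < (V 0).1 := (hmono 0).2.2.1
        _ = b.1 := hv01
    · calc a.2 = (U 0).2 := hu02.symm
        _ < (U 1).2 := (hmono 0).2.1
        _ ≤ c2 := hc2ub 1
    · calc c2 ≤ (V 1).2 := hc2lb 1
        _ < (V 0).2 := (hmono 0).2.2.2
        _ = b.2 := hv02
  obtain ⟨Lf, hLf⟩ := hfdiff (c1, c2) hcmem
  obtain ⟨Lg, hLg⟩ := hgdiff (c1, c2) hcmem
  have hLh : HasDoubleDerivAt h (c1, c2) (dDiff g a b * Lf - dDiff f a b * Lg) :=
    deriv_comb f g (dDiff g a b) (dDiff f a b) (c1, c2) Lf Lg hLf hLg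
  set Lh : ℝ := dDiff g a b * Lf - dDiff f a b * Lg with hLhdef
  have hpinch : Lh = 0 := by
    by_contra hne
    have hLpos : 0 < |Lh| := abs_pos.2 hne
    obtain ⟨δ₁, hδ₁, δ₂, hδ₂, hbound⟩ := hLh (|Lh| / 2) (by positivity)
    obtain ⟨n, hn1, hn2⟩ : ∃ n, (b.1 - a.1) / 4 ^ n < δ₁ ∧ (b.2 - a.2) / 4 ^ n < δ₂ := by
      have hw1 : (0 : ℝ) < b.1 - a.1 := by linarith
      have hw2 : (0 : ℝ) < b.2 - a.2 := by linarith
      obtain ⟨n, hn⟩ := exists_pow_lt_of_lt_one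
        (lt_min (div_pos hδ₁ hw1) (div_pos hδ₂ hw2)) (by norm_num : (1 : ℝ) / 4 < 1)
      rw [div_pow, one_pow] at hn
      have h4 : (0 : ℝ) < 4 ^ n := by positivity
      have ha := lt_of_lt_of_le hn (min_le_left _ _)
      have hb := lt_of_lt_of_le hn (min_le_right _ _)
      rw [div_lt_div_iff₀ h4 hw1] at ha
      rw [div_lt_div_iff₀ h4 hw2] at hb
      exact ⟨n, by rw [div_lt_iff₀ h4]; linarith, by rw [div_lt_iff₀ h4]; linarith⟩
    obtain ⟨g1, g2, g3, g4, g5, g6, g7⟩ := hinv n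
    obtain ⟨w1, w2⟩ := hwid n
    have hcu1 : (U n).1 ≤ c1 := hc1ub n
    have hcv1 : c1 ≤ (V n).1 := hc1lb n
    have hcu2 : (U n).2 ≤ c2 := hc2ub n
    have hcv2 : c2 ≤ (V n).2 := hc2lb n
    have corner : ∀ x y : ℝ, (U n).1 ≤ x → x ≤ (V n).1 → (U n).2 ≤ y → y ≤ (V n).2 →
        |Lh * ((x - c1) * (y - c2)) - dDiff h (c1, c2) (x, y)|
          ≤ |Lh| / 2 * |(x - c1) * (y - c2)| := by
      intro x y k1 k2 k3 k4
      by_cases hβ : (x - c1) * (y - c2) = 0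
      · have hE : dDiff h (c1, c2) (x, y) = 0 := by
          rcases mul_eq_zero.1 hβ with hc | hc
          · have hxc : x = c1 := by
              have := sub_eq_zero.1 hc
              linarith
            simp only [dDiff, hxc]
            ring
          · have hyc : y = c2 := by
              have := sub_eq_zero.1 hc
              linarith
            simp only [dDiff, hyc]
            ring
        rw [hβ, hE]
        simp
      · obtain ⟨h1ne, h2ne⟩ := mul_ne_zero_iff.1 hβ
        have hb1 : 0 < |x - c1| := abs_pos.2 h1ne
        have hb2 : 0 < |y - c2| := abs_pos.2 h2ne
        have hd1 : |x - c1| < δ₁ := by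
          have hle : |x - c1| ≤ (V n).1 - (U n).1 := abs_le.2 ⟨by linarith, by linarith⟩
          rw [w1] at hle
          linarith
        have hd2 : |y - c2| < δ₂ := by
          have hle : |y - c2| ≤ (V n).2 - (U n).2 := abs_le.2 ⟨by linarith, by linarith⟩
          rw [w2] at hle
          linarith
        have hs := hbound (x, y) (Set.mem_univ _) (by simpa using hb1) (by simpa using hd1)
          (by simpa using hb2) (by simpa using hd2)
        simp only at hs
        have hrw : Lh * ((x - c1) * (y - c2)) - dDiff h (c1, c2) (x, y)
            = -(((x - c1) * (y - c2)) * (dSlope h (c1, c2) (x, y) - Lh)) := by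
          simp only [dSlope]
          field_simp
          ring
        rw [hrw, abs_neg, abs_mul]
        have hmul := mul_le_mul_of_nonneg_left hs.le
          (abs_nonneg ((x - c1) * (y - c2)))
        calc |(x - c1) * (y - c2)| * |dSlope h (c1, c2) (x, y) - Lh|
            ≤ |(x - c1) * (y - c2)| * (|Lh| / 2) := hmul
          _ = |Lh| / 2 * |(x - c1) * (y - c2)| := by ring
    have Bvv := corner (V n).1 (V n).2 (by linarith) le_rfl (by linarith) le_rfl
    have Buu := corner (U n).1 (U n).2 le_rfl (by linarith) le_rfl (by linarith)
    have Bvu := corner (V n).1 (U n).2 (by linarith) le_rfl le_rfl (by linarith)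
    have Buv := corner (U n).1 (V n).2 le_rfl (by linarith) (by linarith) le_rfl
    have hzero : dDiff h (c1, c2) ((V n).1, (V n).2) + dDiff h (c1, c2) ((U n).1, (U n).2)
        - dDiff h (c1, c2) ((V n).1, (U n).2) - dDiff h (c1, c2) ((U n).1, (V n).2) = 0 := by
      have key : dDiff h (U n) (V n) = dDiff h (c1, c2) ((V n).1, (V n).2)
          + dDiff h (c1, c2) ((U n).1, (U n).2) - dDiff h (c1, c2) ((V n).1, (U n).2)
          - dDiff h (c1, c2) ((U n).1, (V n).2) := by
        simp only [dDiff]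
        ring
      rw [← key]
      exact g7
    have habs1 : |((V n).1 - c1) * ((V n).2 - c2)| = ((V n).1 - c1) * ((V n).2 - c2) :=
      abs_of_nonneg (mul_nonneg (by linarith) (by linarith))
    have hq1 : (0:ℝ) ≤ c1 - (U n).1 := by linarith
    have hq2 : (0:ℝ) ≤ c2 - (U n).2 := by linarith
    have hq3 : (0:ℝ) ≤ (V n).1 - c1 := by linarith
    have hq4 : (0:ℝ) ≤ (V n).2 - c2 := by linarith
    have habs2 : |((U n).1 - c1) * ((U n).2 - c2)| = ((U n).1 - c1) * ((U n).2 - c2) :=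
      abs_of_nonneg (by nlinarith [mul_nonneg hq1 hq2])
    have habs3 : |((V n).1 - c1) * ((U n).2 - c2)| = -(((V n).1 - c1) * ((U n).2 - c2)) :=
      abs_of_nonpos (by nlinarith [mul_nonneg hq3 hq2])
    have habs4 : |((U n).1 - c1) * ((V n).2 - c2)| = -(((U n).1 - c1) * ((V n).2 - c2)) :=
      abs_of_nonpos (by nlinarith [mul_nonneg hq1 hq4])
    have hW : 0 < ((V n).1 - (U n).1) * ((V n).2 - (U n).2) :=
      mul_pos (by linarith) (by linarith)
    have e1 : Lh * (((V n).1 - (U n).1) * ((V n).2 - (U n).2)) =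
        (Lh * (((V n).1 - c1) * ((V n).2 - c2)) - dDiff h (c1, c2) ((V n).1, (V n).2))
        + (Lh * (((U n).1 - c1) * ((U n).2 - c2)) - dDiff h (c1, c2) ((U n).1, (U n).2))
        - (Lh * (((V n).1 - c1) * ((U n).2 - c2)) - dDiff h (c1, c2) ((V n).1, (U n).2))
        - (Lh * (((U n).1 - c1) * ((V n).2 - c2)) - dDiff h (c1, c2) ((U n).1, (V n).2)) := by
      linear_combination hzero
    have tri4 : ∀ p q r s : ℝ, |p + q - r - s| ≤ |p| + |q| + |r| + |s| := by
      intro p q r s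
      refine abs_le.2 ⟨?_, ?_⟩
      · linarith [neg_abs_le p, neg_abs_le q, le_abs_self r, le_abs_self s]
      · linarith [le_abs_self p, le_abs_self q, neg_abs_le r, neg_abs_le s]
    have hineq := tri4
      (Lh * (((V n).1 - c1) * ((V n).2 - c2)) - dDiff h (c1, c2) ((V n).1, (V n).2))
      (Lh * (((U n).1 - c1) * ((U n).2 - c2)) - dDiff h (c1, c2) ((U n).1, (U n).2))
      (Lh * (((V n).1 - c1) * ((U n).2 - c2)) - dDiff h (c1, c2) ((V n).1, (U n).2))
      (Lh * (((U n).1 - c1) * ((V n).2 - c2)) - dDiff h (c1, c2) ((U n).1, (V n).2))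
    rw [← e1] at hineq
    have habsW : |Lh * (((V n).1 - (U n).1) * ((V n).2 - (U n).2))|
        = |Lh| * (((V n).1 - (U n).1) * ((V n).2 - (U n).2)) := by
      rw [abs_mul, abs_of_nonneg hW.le]
    rw [habsW] at hineq
    have hsum : |Lh| / 2 * |((V n).1 - c1) * ((V n).2 - c2)|
        + |Lh| / 2 * |((U n).1 - c1) * ((U n).2 - c2)|
        + |Lh| / 2 * |((V n).1 - c1) * ((U n).2 - c2)|
        + |Lh| / 2 * |((U n).1 - c1) * ((V n).2 - c2)|
        = |Lh| / 2 * (((V n).1 - (U n).1) * ((V n).2 - (U n).2)) := by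
      rw [habs1, habs2, habs3, habs4]
      ring
    have final : |Lh| * (((V n).1 - (U n).1) * ((V n).2 - (U n).2))
        ≤ |Lh| / 2 * (((V n).1 - (U n).1) * ((V n).2 - (U n).2)) := by
      linarith [Bvv, Buu, Bvu, Buv, hineq]
    nlinarith [mul_pos (show (0:ℝ) < |Lh| / 2 by linarith) hW]
  refine ⟨(c1, c2), hcmem, Lf, Lg, hLf, hLg, ?_⟩
  rw [hLhdef] at hpinch
  linear_combination hpinch
end
end

section
/- (Double Fermat's theorem) Let f be defined on a double open interval I and let a ∈ I. If a is a double extreme point for f on I and f is double differentiable at a, then f'(a) = 0. -/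
open Set Filter Topology MeasureTheory

noncomputable section

/-- double Fermat: at a double extreme point in a double open
interval, the double derivative (if it exists) vanishes. -/
theorem stmt13 (f : ℝ × ℝ → ℝ) (I₁ I₂ : Set ℝ)
    (h₁o : IsOpen I₁) (h₂o : IsOpen I₂)
    (h₁c : I₁.OrdConnected) (h₂c : I₂.OrdConnected)
    (a : ℝ × ℝ) (ha : a ∈ I₁ ×ˢ I₂) (L : ℝ)
    (hext : (∀ b ∈ I₁ ×ˢ I₂, b.1 ≠ a.1 → b.2 ≠ a.2 → dDiff f a b < 0) ∨
            (∀ b ∈ I₁ ×ˢ I₂, b.1 ≠ a.1 → b.2 ≠ a.2 → 0 < dDiff f a b))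
    (hdiff : HasDoubleDerivAt f a L) :
    L = 0 := by
  by_contra hL
  have hεpos : 0 < |L| := abs_pos.mpr hL
  obtain ⟨δ₁, hδ₁, δ₂, hδ₂, H⟩ := hdiff |L| hεpos
  obtain ⟨r₁, hr₁, hb₁⟩ := Metric.isOpen_iff.mp h₁o a.1 ha.1
  obtain ⟨r₂, hr₂, hb₂⟩ := Metric.isOpen_iff.mp h₂o a.2 ha.2
  set t₁ : ℝ := min δ₁ r₁ / 2 with ht₁def
  set t₂ : ℝ := min δ₂ r₂ / 2 with ht₂def
  have ht₁ : 0 < t₁ := by positivity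
  have ht₂ : 0 < t₂ := by positivity
  have ht₁δ : t₁ < δ₁ := by
    have := min_le_left δ₁ r₁; linarith
  have ht₁r : t₁ < r₁ := by
    have := min_le_right δ₁ r₁; linarith
  have ht₂δ : t₂ < δ₂ := by
    have := min_le_left δ₂ r₂; linarith
  have ht₂r : t₂ < r₂ := by
    have := min_le_right δ₂ r₂; linarith
  have hmem1 : a.1 + t₁ ∈ I₁ := hb₁ (by simp [Real.dist_eq, abs_of_pos ht₁, ht₁r])
  have hmem2p : a.2 + t₂ ∈ I₂ := hb₂ (by simp [Real.dist_eq, abs_of_pos ht₂, ht₂r])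
  have hmem2m : a.2 - t₂ ∈ I₂ := hb₂ (by
    simp only [Metric.mem_ball, Real.dist_eq]
    rw [show a.2 - t₂ - a.2 = -t₂ by ring, abs_neg, abs_of_pos ht₂]; exact ht₂r)
  -- the two test points
  have key : ∀ s : ℝ, s = t₂ ∨ s = -t₂ →
      |dSlope f a (a.1 + t₁, a.2 + s) - L| < |L| := by
    intro s hs
    have habs : |s| = t₂ := by rcases hs with h | h <;> simp [h, abs_of_pos ht₂]
    refine H (a.1 + t₁, a.2 + s) (Set.mem_univ _) ?_ ?_ ?_ ?_ <;>
      simp only [add_sub_cancel_left, habs, abs_of_pos ht₁] <;> assumption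
  have hslope : ∀ s : ℝ, s = t₂ ∨ s = -t₂ →
      dSlope f a (a.1 + t₁, a.2 + s) =
        dDiff f a (a.1 + t₁, a.2 + s) / (t₁ * s) := by
    intro s _
    simp [dSlope, add_sub_cancel_left]
  have h1 := key t₂ (Or.inl rfl)
  have h2 := key (-t₂) (Or.inr rfl)
  rw [hslope t₂ (Or.inl rfl)] at h1
  rw [hslope (-t₂) (Or.inr rfl)] at h2
  have hne1 : (a.1 + t₁ : ℝ) ≠ a.1 := by intro h; nlinarith [ht₁]
  have hne2p : (a.2 + t₂ : ℝ) ≠ a.2 := by intro h; nlinarith [ht₂]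
  have hne2m : (a.2 + -t₂ : ℝ) ≠ a.2 := by intro h; nlinarith [ht₂]
  have hmemp : ((a.1 + t₁, a.2 + t₂) : ℝ × ℝ) ∈ I₁ ×ˢ I₂ := ⟨hmem1, hmem2p⟩
  have hmemm : ((a.1 + t₁, a.2 + -t₂) : ℝ × ℝ) ∈ I₁ ×ˢ I₂ := by
    refine ⟨hmem1, ?_⟩
    simpa [sub_eq_add_neg] using hmem2m
  rcases hext with hmax | hmin
  · have d1 := hmax _ hmemp hne1 hne2p
    have d2 := hmax _ hmemm hne1 hne2m
    have s1 : dDiff f a (a.1 + t₁, a.2 + t₂) / (t₁ * t₂) < 0 :=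
      div_neg_of_neg_of_pos d1 (by positivity)
    have s2 : 0 < dDiff f a (a.1 + t₁, a.2 + -t₂) / (t₁ * -t₂) :=
      div_pos_of_neg_of_neg d2 (by nlinarith)
    rw [abs_lt] at h1 h2
    rcases abs_cases L with ⟨hc, _⟩ | ⟨hc, _⟩ <;> rw [hc] at h1 h2 <;> linarith
  · have d1 := hmin _ hmemp hne1 hne2p
    have d2 := hmin _ hmemm hne1 hne2m
    have s1 : 0 < dDiff f a (a.1 + t₁, a.2 + t₂) / (t₁ * t₂) :=
      div_pos d1 (by positivity)
    have s2 : dDiff f a (a.1 + t₁, a.2 + -t₂) / (t₁ * -t₂) < 0 :=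
      div_neg_of_pos_of_neg d2 (by nlinarith)
    rw [abs_lt] at h1 h2
    rcases abs_cases L with ⟨hc, _⟩ | ⟨hc, _⟩ <;> rw [hc] at h1 h2 <;> linarith
end
end
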